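/- arXiv:1206.4364 — 11 statements merged into one kernel-verified Lean document; each statement's English description precedes it below -/
import Mathlib

section
/- Let γ ∈ ℝ, let h, g, ω be holomorphic on 𝔻 with |ω(z)| < 1, g'(z) = ω(z) h'(z) and h(z) + e^{−2iγ} g(z) = z/(1 − e^{iγ} z) for all z ∈ 𝔻 (i.e. f = h + conj(g) ∈ S⁰(H_γ) with dilatation ω). Let H(z) = (h(z) + z h'(z))/2 and G(z) = (g(z) − z g'(z))/2 be the analytic and co-analytic parts of f₀ ∗ f. Then for every z ∈ 𝔻 at which the denominators are nonzero, the dilatation ω̃(z) = G'(z)/H'(z) of f₀ ∗ f satisfies ω̃(z) = −z e^{−iγ} · (ω(z)² + e^{2iγ}(ω(z) − (1/2) z ω'(z)) + (1/2) e^{iγ} ω'(z)) / (1 + e^{−2iγ}(ω(z) − (1/2) z ω'(z)) + (1/2) e^{−iγ} z² ω'(z)). -/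
open Complex Metric Set

/-- The analytic part of `f₀ ∗ f`, namely `(h(z) + z h'(z))/2`. -/
noncomputable def f0convH (h : ℂ → ℂ) (z : ℂ) : ℂ := (h z + z * deriv h z) / 2

/-- The co-analytic part of `f₀ ∗ f`, namely `(g(z) − z g'(z))/2`. -/
noncomputable def f0convG (g : ℂ → ℂ) (z : ℂ) : ℂ := (g z - z * deriv g z) / 2

set_option maxHeartbeats 2000000 in
/-- Lemma 2.1: the dilatation of `f₀ ∗ f` for `f = h + conj g ∈ S⁰(H_γ)`
with dilatation `ω`. -/
theorem dilatation_of_convolution_slanted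
    (γ : ℝ) (h g ω : ℂ → ℂ)
    (hh : DifferentiableOn ℂ h (Metric.ball (0:ℂ) 1))
    (hg : DifferentiableOn ℂ g (Metric.ball (0:ℂ) 1))
    (hω : DifferentiableOn ℂ ω (Metric.ball (0:ℂ) 1))
    (hωlt : ∀ z ∈ Metric.ball (0:ℂ) 1, ‖ω z‖ < 1)
    (hdil : ∀ z ∈ Metric.ball (0:ℂ) 1, deriv g z = ω z * deriv h z)
    (hshear : ∀ z ∈ Metric.ball (0:ℂ) 1,
      h z + Complex.exp (-(2*γ : ℝ) * Complex.I) * g z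
        = z / (1 - Complex.exp (γ * Complex.I) * z)) :
    ∀ z ∈ Metric.ball (0:ℂ) 1,
      deriv (f0convH h) z ≠ 0 →
      1 + Complex.exp (-(2*γ : ℝ) * Complex.I) * (ω z - (1/2) * z * deriv ω z)
          + (1/2) * Complex.exp (-(γ : ℝ) * Complex.I) * z^2 * deriv ω z ≠ 0 →
      deriv (f0convG g) z / deriv (f0convH h) z =
        -z * Complex.exp (-(γ : ℝ) * Complex.I) *
          (((ω z)^2 + Complex.exp ((2*γ : ℝ) * Complex.I) * (ω z - (1/2) * z * deriv ω z)
              + (1/2) * Complex.exp ((γ : ℝ) * Complex.I) * deriv ω z) /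
           (1 + Complex.exp (-(2*γ : ℝ) * Complex.I) * (ω z - (1/2) * z * deriv ω z)
              + (1/2) * Complex.exp (-(γ : ℝ) * Complex.I) * z^2 * deriv ω z)) := by
  intro z hz hH hD
  set E : ℂ := Complex.exp ((γ : ℂ) * Complex.I) with hEdef
  have hE : E ≠ 0 := Complex.exp_ne_zero _
  have hexp2 : Complex.exp ((2*γ : ℝ) * Complex.I) = E^2 := by
    have e : ((2*γ : ℝ) : ℂ) * Complex.I = (γ:ℂ)*Complex.I + (γ:ℂ)*Complex.I := by
      push_cast; ring
    rw [e, Complex.exp_add, hEdef, sq]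
  have hexpn2 : Complex.exp (-(2*γ : ℝ) * Complex.I) = (E^2)⁻¹ := by
    have e : (-(2*γ : ℝ) : ℂ) * Complex.I = -((γ:ℂ)*Complex.I + (γ:ℂ)*Complex.I) := by
      push_cast; ring
    rw [e, Complex.exp_neg, Complex.exp_add, hEdef, sq]
  have hexpn1 : Complex.exp (-(γ : ℝ) * Complex.I) = E⁻¹ := by
    have e : (-(γ : ℝ) : ℂ) * Complex.I = -((γ:ℂ)*Complex.I) := by push_cast; ring
    rw [e, Complex.exp_neg, hEdef]
  have hEabs : ‖E‖ = 1 := by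
    rw [hEdef, Complex.norm_exp]; simp
  have hune : ∀ w ∈ Metric.ball (0:ℂ) 1, (1 : ℂ) - E*w ≠ 0 := by
    intro w hw heq
    have hw1 : ‖w‖ < 1 := by
      simpa [Complex.dist_eq] using mem_ball.mp hw
    have hE1 : E * w = 1 := by linear_combination -heq
    have : ‖E * w‖ = 1 := by rw [hE1]; simp
    rw [norm_mul, hEabs, one_mul] at this
    exact absurd this (ne_of_lt hw1)
  have hu : (1 : ℂ) - E*z ≠ 0 := hune z hz
  have hzmem : Metric.ball (0:ℂ) 1 ∈ nhds z := isOpen_ball.mem_nhds hz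
  -- analyticity gives differentiability of derivatives
  have hhA : AnalyticOnNhd ℂ h (Metric.ball (0:ℂ) 1) := hh.analyticOnNhd isOpen_ball
  have hgA : AnalyticOnNhd ℂ g (Metric.ball (0:ℂ) 1) := hg.analyticOnNhd isOpen_ball
  have hh' : DifferentiableAt ℂ (deriv h) z := (hhA.deriv z hz).differentiableAt
  have hg' : DifferentiableAt ℂ (deriv g) z := (hgA.deriv z hz).differentiableAt
  have hhd : DifferentiableAt ℂ h z := hh.differentiableAt hzmem
  have hgd : DifferentiableAt ℂ g z := hg.differentiableAt hzmem
  have hωd : DifferentiableAt ℂ ω z := hω.differentiableAt hzmem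
  -- derivative of the Koebe-like map
  have hkd : ∀ w, (1:ℂ) - E*w ≠ 0 →
      HasDerivAt (fun v : ℂ => v / (1 - E*v)) (((1-E*w)^2)⁻¹) w := by
    intro w hw
    have h0 : HasDerivAt (fun v : ℂ => 1 - E*v) (-E) w := by
      simpa using ((hasDerivAt_id w).const_mul E).const_sub 1
    have := (hasDerivAt_id' w).fun_div h0 hw
    refine this.congr_deriv ?_
    field_simp
    ring
  have hK1d : ∀ w, (1:ℂ) - E*w ≠ 0 →
      HasDerivAt (fun v : ℂ => ((1-E*v)^2)⁻¹) (2*E*((1-E*w)^3)⁻¹) w := by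
    intro w hw
    have h0 : HasDerivAt (fun v : ℂ => 1 - E*v) (-E) w := by
      simpa using ((hasDerivAt_id w).const_mul E).const_sub 1
    have h1 : HasDerivAt (fun v : ℂ => (1 - E*v)^2) (2*(1-E*w)*(-E)) w := by
      refine (h0.fun_pow 2).congr_deriv ?_; push_cast; ring
    have h2 : ((1-E*w)^2 : ℂ) ≠ 0 := pow_ne_zero _ hw
    have := h1.inv h2
    refine this.congr_deriv ?_
    field_simp
  -- first derivative of the shear relation
  have P1 : ∀ w ∈ Metric.ball (0:ℂ) 1,
      deriv h w + (E^2)⁻¹ * deriv g w = ((1 - E*w)^2)⁻¹ := by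
    intro w hw
    have hwmem : Metric.ball (0:ℂ) 1 ∈ nhds w := isOpen_ball.mem_nhds hw
    have hev : (fun v => h v + (E^2)⁻¹ * g v) =ᶠ[nhds w] (fun v => v / (1 - E*v)) := by
      filter_upwards [hwmem] with v hv
      rw [← hexpn2]
      exact hshear v hv
    have hL : HasDerivAt (fun v => h v + (E^2)⁻¹ * g v)
        (deriv h w + (E^2)⁻¹ * deriv g w) w :=
      ((hh.differentiableAt hwmem).hasDerivAt).add
        (((hg.differentiableAt hwmem).hasDerivAt).const_mul _)
    exact hL.unique ((hkd w (hune w hw)).congr_of_eventuallyEq hev)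
  -- second derivative of the shear relation
  have P2 : deriv (deriv h) z + (E^2)⁻¹ * deriv (deriv g) z = 2*E*((1-E*z)^3)⁻¹ := by
    have hev : (fun w => deriv h w + (E^2)⁻¹ * deriv g w)
        =ᶠ[nhds z] (fun w => ((1-E*w)^2)⁻¹) := by
      filter_upwards [hzmem] with w hw using P1 w hw
    have hL : HasDerivAt (fun w => deriv h w + (E^2)⁻¹ * deriv g w)
        (deriv (deriv h) z + (E^2)⁻¹ * deriv (deriv g) z) z :=
      (hh'.hasDerivAt).add ((hg'.hasDerivAt).const_mul _)
    exact hL.unique ((hK1d z hu).congr_of_eventuallyEq hev)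
  -- derivative of the dilatation relation
  have P3 : deriv (deriv g) z = deriv ω z * deriv h z + ω z * deriv (deriv h) z := by
    have hev : deriv g =ᶠ[nhds z] (fun w => ω w * deriv h w) := by
      filter_upwards [hzmem] with w hw using hdil w hw
    have hR : HasDerivAt (fun w => ω w * deriv h w)
        (deriv ω z * deriv h z + ω z * deriv (deriv h) z) z :=
      (hωd.hasDerivAt).mul (hh'.hasDerivAt)
    rw [hev.deriv_eq, hR.deriv]
  -- derivatives of the convolution parts
  have hHconv : deriv (f0convH h) z
      = (deriv h z + (deriv h z + z * deriv (deriv h) z)) / 2 := by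
    unfold f0convH
    have h1 : HasDerivAt (fun w => h w + w * deriv h w)
        (deriv h z + (1 * deriv h z + z * deriv (deriv h) z)) z :=
      (hhd.hasDerivAt).add ((hasDerivAt_id z).mul (hh'.hasDerivAt))
    rw [(h1.div_const 2).deriv]; ring
  have hGconv : deriv (f0convG g) z
      = (deriv g z - (deriv g z + z * deriv (deriv g) z)) / 2 := by
    unfold f0convG
    have h1 : HasDerivAt (fun w => g w - w * deriv g w)
        (deriv g z - (1 * deriv g z + z * deriv (deriv g) z)) z :=
      (hgd.hasDerivAt).sub ((hasDerivAt_id z).mul (hg'.hasDerivAt))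
    rw [(h1.div_const 2).deriv]; ring
  -- solve for h' and h''
  have hC' : E^2 + ω z ≠ 0 := by
    intro heq
    have : ω z = -E^2 := by linear_combination heq
    have habs : ‖ω z‖ = 1 := by
      rw [this, norm_neg, norm_pow, hEabs, one_pow]
    exact absurd habs (ne_of_lt (hωlt z hz))
  have e1 := P1 z hz
  rw [hdil z hz] at e1
  have hh1 : deriv h z = E^2 / ((1-E*z)^2 * (E^2 + ω z)) := by
    rw [eq_div_iff (mul_ne_zero (pow_ne_zero _ hu) hC')]
    field_simp at e1
    linear_combination e1
  have e2 := P2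
  rw [P3] at e2
  have hh2 : deriv (deriv h) z
      = (2*E^3 - deriv ω z * deriv h z * (1-E*z)^3) / ((1-E*z)^3 * (E^2 + ω z)) := by
    rw [eq_div_iff (mul_ne_zero (pow_ne_zero 3 hu) hC')]
    field_simp at e2
    linear_combination e2
  -- main computation
  set a := ω z with ha
  set b := deriv ω z with hb
  set u := (1:ℂ) - E*z with hudef
  set C := E^2 + a with hCdef
  clear_value a b u C
  have hden : (2*u^3*C^2 : ℂ) ≠ 0 := by
    exact mul_ne_zero (mul_ne_zero two_ne_zero (pow_ne_zero _ hu)) (pow_ne_zero _ hC')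
  have hu2C : (u^2*C : ℂ) ≠ 0 := mul_ne_zero (pow_ne_zero _ hu) hC'
  have hu3C : (u^3*C : ℂ) ≠ 0 := mul_ne_zero (pow_ne_zero _ hu) hC'
  have q1 : deriv h z * (u^2*C) = E^2 := by
    rw [hh1, div_mul_cancel₀ _ hu2C]
  have q2 : deriv (deriv h) z * (u^3*C) = 2*E^3 - b*deriv h z*u^3 := by
    rw [hh2, div_mul_cancel₀ _ hu3C]
  have hGval : deriv (f0convG g) z
      = -z*E^2*(b*u*C + 2*a*E*C - a*b*u) / (2*u^3*C^2) := by
    rw [hGconv, P3, hdil z hz, ← ha, eq_div_iff hden]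
    linear_combination (z*a*b*u - z*b*u*C) * q1 - z*a*C * q2
  have hHval : deriv (f0convH h) z = E^2*(2*C - z*b*u) / (2*u^3*C^2) := by
    rw [hHconv, eq_div_iff hden]
    linear_combination (2*u*C - z*b*u) * q1 + z*C * q2 + 2*C*E^2*hudef
  rw [hexpn2, hexpn1] at hD
  rw [hexpn2, hexpn1, hexp2, hGval, hHval, ← mul_div_assoc,
      div_eq_div_iff (hHval ▸ hH) hD]
  field_simp [hE, hu, hC']
  rw [hudef, hCdef]
  ring
end

section
/- Let h, g, ω be holomorphic on 𝔻 with |ω(z)| < 1, g'(z) = ω(z) h'(z) and h(z) + g(z) = z/(1 + z) for all z ∈ 𝔻 (i.e. f = h + conj(g) ∈ S⁰(H_π) with dilatation ω). Then for every z ∈ 𝔻 at which the denominators are nonzero, the dilatation ω̃ of f₀ ∗ f satisfies ω̃(z) = z · (ω(z)² + (ω(z) − (1/2) z ω'(z)) − (1/2) ω'(z)) / (1 + (ω(z) − (1/2) z ω'(z)) − (1/2) z² ω'(z)). -/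
open Complex Metric Set

set_option maxHeartbeats 2000000 in
/-- Corollary 2.2: the dilatation of `f₀ ∗ f` for `f = h + conj g ∈ S⁰(H_π)`
with dilatation `ω`. -/
theorem dilatation_of_convolution_left_halfplane
    (h g ω : ℂ → ℂ)
    (hh : DifferentiableOn ℂ h (Metric.ball (0:ℂ) 1))
    (hg : DifferentiableOn ℂ g (Metric.ball (0:ℂ) 1))
    (hω : DifferentiableOn ℂ ω (Metric.ball (0:ℂ) 1))
    (hωlt : ∀ z ∈ Metric.ball (0:ℂ) 1, ‖ω z‖ < 1)
    (hdil : ∀ z ∈ Metric.ball (0:ℂ) 1, deriv g z = ω z * deriv h z)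
    (hshear : ∀ z ∈ Metric.ball (0:ℂ) 1, h z + g z = z / (1 + z)) :
    ∀ z ∈ Metric.ball (0:ℂ) 1,
      deriv (f0convH h) z ≠ 0 →
      1 + (ω z - (1/2) * z * deriv ω z) - (1/2) * z^2 * deriv ω z ≠ 0 →
      deriv (f0convG g) z / deriv (f0convH h) z =
        z * (((ω z)^2 + (ω z - (1/2) * z * deriv ω z) - (1/2) * deriv ω z) /
          (1 + (ω z - (1/2) * z * deriv ω z) - (1/2) * z^2 * deriv ω z)) := by
  intro z hz hA hden
  have hop : IsOpen (Metric.ball (0:ℂ) 1) := isOpen_ball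
  have hc' : ∀ w ∈ Metric.ball (0:ℂ) 1, (1:ℂ) + w ≠ 0 := by
    intro w hw hzero
    have h1 : w = -1 := by linear_combination hzero
    have := mem_ball_zero_iff.mp hw
    rw [h1] at this
    simp at this
  have hc : (1:ℂ) + z ≠ 0 := hc' z hz
  have hu : (1:ℂ) + ω z ≠ 0 := by
    intro hzero
    have h1 : ω z = -1 := by linear_combination hzero
    have := hωlt z hz
    rw [h1] at this
    simp at this
  have hhA := hh.analyticOnNhd hop
  have hgA := hg.analyticOnNhd hop
  have hωA := hω.analyticOnNhd hop
  -- first derivative relation from the shear equation, valid on the ball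
  have E1 : ∀ w ∈ Metric.ball (0:ℂ) 1, deriv h w + deriv g w = 1/(1+w)^2 := by
    intro w hw
    have hcw := hc' w hw
    have hhd := hh.differentiableAt (hop.mem_nhds hw)
    have hgd := hg.differentiableAt (hop.mem_nhds hw)
    have heq : (fun x => h x + g x) =ᶠ[nhds w] fun x => x/(1+x) :=
      Filter.eventuallyEq_of_mem (hop.mem_nhds hw) hshear
    have h1 : deriv (fun x => h x + g x) w = deriv (fun x : ℂ => x/(1+x)) w :=
      heq.deriv_eq
    rw [deriv_fun_add hhd hgd] at h1
    have h2 : HasDerivAt (fun x : ℂ => x/(1+x)) (1/(1+w)^2) w := by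
      have := (hasDerivAt_id w).fun_div ((hasDerivAt_id w).const_add 1) hcw
      refine this.congr_deriv ?_
      simp only [id]
      field_simp
      ring
    rw [h1, h2.deriv]
  -- second derivative relation
  have hh'd : DifferentiableAt ℂ (deriv h) z := ((hhA.deriv) z hz).differentiableAt
  have hg'd : DifferentiableAt ℂ (deriv g) z := ((hgA.deriv) z hz).differentiableAt
  have hωd : DifferentiableAt ℂ ω z := hω.differentiableAt (hop.mem_nhds hz)
  have E2 : deriv (deriv h) z + deriv (deriv g) z = -2/(1+z)^3 := by
    have heq : (fun x => deriv h x + deriv g x) =ᶠ[nhds z] fun x => 1/(1+x)^2 :=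
      Filter.eventuallyEq_of_mem (hop.mem_nhds hz) E1
    have h1 : deriv (fun x => deriv h x + deriv g x) z
        = deriv (fun x : ℂ => 1/(1+x)^2) z := heq.deriv_eq
    rw [deriv_fun_add hh'd hg'd] at h1
    have h2 : HasDerivAt (fun x : ℂ => 1/(1+x)^2) (-2/(1+z)^3) z := by
      have hd : HasDerivAt (fun x : ℂ => (1+x)^2) (2*(1+z)) z := by
        have := ((hasDerivAt_id z).const_add 1).fun_pow 2
        refine this.congr_deriv ?_
        norm_num
      have := (hasDerivAt_const z (1:ℂ)).fun_div hd (pow_ne_zero 2 hc)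
      refine this.congr_deriv ?_
      field_simp
      ring
    rw [h1, h2.deriv]
  -- derivative of the dilatation relation
  have E3 : deriv (deriv g) z = deriv ω z * deriv h z + ω z * deriv (deriv h) z := by
    have heq : deriv g =ᶠ[nhds z] fun x => ω x * deriv h x :=
      Filter.eventuallyEq_of_mem (hop.mem_nhds hz) hdil
    have h1 : deriv (deriv g) z = deriv (fun x => ω x * deriv h x) z := heq.deriv_eq
    rw [h1, deriv_fun_mul hωd hh'd]
  -- derivatives of the convolution parts
  have hhd := hh.differentiableAt (hop.mem_nhds hz)
  have hgd := hg.differentiableAt (hop.mem_nhds hz)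
  have HH : deriv (f0convH h) z
      = (deriv h z + (deriv h z + z * deriv (deriv h) z)) / 2 := by
    have : HasDerivAt (f0convH h)
        ((deriv h z + (1 * deriv h z + z * deriv (deriv h) z)) / 2) z := by
      exact ((hhd.hasDerivAt.add ((hasDerivAt_id z).mul hh'd.hasDerivAt)).div_const 2)
    rw [this.deriv]
    ring
  have HG : deriv (f0convG g) z = (- (z * deriv (deriv g) z)) / 2 := by
    have : HasDerivAt (f0convG g)
        ((deriv g z - (1 * deriv g z + z * deriv (deriv g) z)) / 2) z := by
      exact ((hgd.hasDerivAt.sub ((hasDerivAt_id z).mul hg'd.hasDerivAt)).div_const 2)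
    rw [this.deriv]
    ring
  -- abbreviations
  set A := deriv h z with hAdef
  set B := deriv (deriv h) z with hBdef
  set u := ω z with hudef
  set v := deriv ω z with hvdef
  have e1 : A * (1 + u) = 1/(1+z)^2 := by
    have := E1 z hz
    rw [hdil z hz] at this
    linear_combination this
  have e2 : B * (1 + u) + A * v = -2/(1+z)^3 := by
    have := E2
    rw [E3] at this
    linear_combination this
  rw [HH] at hA ⊢
  rw [HG, E3]
  have e1' : A * (1 + u) * (1 + z) ^ 2 = 1 := by
    field_simp at e1
    linear_combination e1
  have e2' : (B * (1 + u) + A * v) * (1 + z) ^ 3 = -2 := by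
    field_simp at e2
    linear_combination e2
  rw [← mul_div_assoc, div_eq_div_iff hA hden]
  have hM : (2 * (1 + u) ^ 2 * (1 + z) ^ 3 : ℂ) ≠ 0 := by
    apply mul_ne_zero (mul_ne_zero two_ne_zero (pow_ne_zero 2 hu)) (pow_ne_zero 3 hc)
  refine mul_right_cancel₀ hM ?_
  linear_combination
    ((1+z)*((-(z*v*(1+(u - 1/2*z*v) - 1/2*z^2*v)) - 2*z*(u^2+(u-1/2*z*v)-1/2*v))*(1+u)
      + z*v*u*(1+(u-1/2*z*v)-1/2*z^2*v) + z^2*v*(u^2+(u-1/2*z*v)-1/2*v))) * e1'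
    + (-(z*(u*(1+(u-1/2*z*v)-1/2*z^2*v) + z*(u^2+(u-1/2*z*v)-1/2*v))*(1+u))) * e2'
end

section
/- Let γ, θ ∈ ℝ, n ∈ {1, 2}, and let h, g be holomorphic on 𝔻 with g'(z) = e^{iθ} zⁿ h'(z) and h(z) + e^{−2iγ} g(z) = z/(1 − e^{iγ} z) for all z ∈ 𝔻 (i.e. f = h + conj(g) ∈ S⁰(H_γ) with dilatation ω(z) = e^{iθ} zⁿ). Then for all z ∈ 𝔻 at which the denominators are nonzero, the dilatation ω̃ of f₀ ∗ f satisfies ω̃(z) = −zⁿ e^{i(2θ − γ)} · (z^{n+1} + e^{i(2γ − θ)}(1 − n/2) z + (n/2) e^{i(γ − θ)}) / (1 + e^{i(θ − 2γ)}(1 − n/2) zⁿ + (n/2) e^{i(θ − γ)} z^{n+1}). -/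
open Complex Metric Set

set_option maxHeartbeats 1000000 in
/-- Lemma 2.3: the dilatation of `f₀ ∗ f` for `f = h + conj g ∈ S⁰(H_γ)`
with dilatation `ω(z) = e^{iθ} zⁿ`, `n = 1, 2`. -/
theorem dilatation_of_convolution_monomial
    (γ θ : ℝ) (n : ℕ) (hn : n = 1 ∨ n = 2) (h g : ℂ → ℂ)
    (hh : DifferentiableOn ℂ h (Metric.ball (0:ℂ) 1))
    (hg : DifferentiableOn ℂ g (Metric.ball (0:ℂ) 1))
    (hdil : ∀ z ∈ Metric.ball (0:ℂ) 1,
      deriv g z = Complex.exp (θ * Complex.I) * z ^ n * deriv h z)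
    (hshear : ∀ z ∈ Metric.ball (0:ℂ) 1,
      h z + Complex.exp (-(2*γ : ℝ) * Complex.I) * g z
        = z / (1 - Complex.exp (γ * Complex.I) * z)) :
    ∀ z ∈ Metric.ball (0:ℂ) 1,
      deriv (f0convH h) z ≠ 0 →
      1 + Complex.exp ((θ - 2*γ : ℝ) * Complex.I) * (1 - (n:ℂ)/2) * z^n
          + (n:ℂ)/2 * Complex.exp ((θ - γ : ℝ) * Complex.I) * z^(n+1) ≠ 0 →
      deriv (f0convG g) z / deriv (f0convH h) z =
        -z^n * Complex.exp ((2*θ - γ : ℝ) * Complex.I) *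
          ((z^(n+1) + Complex.exp ((2*γ - θ : ℝ) * Complex.I) * (1 - (n:ℂ)/2) * z
              + (n:ℂ)/2 * Complex.exp ((γ - θ : ℝ) * Complex.I)) /
           (1 + Complex.exp ((θ - 2*γ : ℝ) * Complex.I) * (1 - (n:ℂ)/2) * z^n
              + (n:ℂ)/2 * Complex.exp ((θ - γ : ℝ) * Complex.I) * z^(n+1))) := by
  intro z hz hne hDne
  have hsub : ∀ x y : ℝ, Complex.exp ((x - y : ℝ) * I) =
      Complex.exp ((x:ℝ) * I) * (Complex.exp ((y:ℝ) * I))⁻¹ := by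
    intro x y
    rw [← Complex.exp_neg, ← Complex.exp_add]
    congr 1
    push_cast
    ring
  have hdbl : ∀ x : ℝ, Complex.exp ((2*x : ℝ) * I) = Complex.exp ((x:ℝ) * I) ^ 2 := by
    intro x
    rw [sq, ← Complex.exp_add]
    congr 1
    push_cast
    ring
  set a := Complex.exp ((γ:ℝ) * I) with ha
  set Q := Complex.exp ((θ:ℝ) * I) with hQ
  have hane : a ≠ 0 := Complex.exp_ne_zero _
  have hQne : Q ≠ 0 := Complex.exp_ne_zero _
  have e1 : Complex.exp ((θ - 2*γ : ℝ) * I) = Q * (a^2)⁻¹ := by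
    rw [hsub θ (2*γ), hdbl γ]
  have e2 : Complex.exp ((2*γ - θ : ℝ) * I) = a^2 * Q⁻¹ := by
    rw [hsub (2*γ) θ, hdbl γ]
  have e3 : Complex.exp ((γ - θ : ℝ) * I) = a * Q⁻¹ := hsub γ θ
  have e4 : Complex.exp ((θ - γ : ℝ) * I) = Q * a⁻¹ := hsub θ γ
  have e5 : Complex.exp ((2*θ - γ : ℝ) * I) = Q^2 * a⁻¹ := by
    rw [hsub (2*θ) γ, hdbl θ]
  have e6 : Complex.exp (-((2*γ:ℝ):ℂ) * I) = (a^2)⁻¹ := by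
    rw [show -((2*γ:ℝ):ℂ) * I = 0 - ((2*γ:ℝ):ℂ) * I by ring,
      Complex.exp_sub, Complex.exp_zero, hdbl γ, one_div]
  set b := Q * (a^2)⁻¹ with hb
  clear_value a Q b
  -- basic differentiability
  have hmem : Metric.ball (0:ℂ) 1 ∈ nhds z := isOpen_ball.mem_nhds hz
  have hAnh := hh.analyticOnNhd isOpen_ball
  have hAng := hg.analyticOnNhd isOpen_ball
  have hdh : ∀ w ∈ Metric.ball (0:ℂ) 1, DifferentiableAt ℂ h w :=
    fun w hw => (hAnh w hw).differentiableAt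
  have hdg : ∀ w ∈ Metric.ball (0:ℂ) 1, DifferentiableAt ℂ g w :=
    fun w hw => (hAng w hw).differentiableAt
  have hdh' : DifferentiableAt ℂ (deriv h) z := (hAnh.deriv z hz).differentiableAt
  have hdg' : DifferentiableAt ℂ (deriv g) z := (hAng.deriv z hz).differentiableAt
  have hu : ∀ w ∈ Metric.ball (0:ℂ) 1, (1 : ℂ) - a * w ≠ 0 := by
    intro w hw hzero
    have h1 : a * w = 1 := by linear_combination -hzero
    have : ‖a * w‖ = 1 := by rw [h1]; simp
    rw [norm_mul, ha, Complex.norm_exp_ofReal_mul_I, one_mul] at this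
    rw [mem_ball, dist_zero_right] at hw
    simp [this] at hw
  -- key identity I1 at each point of the ball
  have keyI1 : ∀ w ∈ Metric.ball (0:ℂ) 1,
      deriv h w * (1 + b * w^n) * (1 - a*w)^2 = 1 := by
    intro w hw
    have hde : deriv (fun x => h x + Complex.exp (-((2*γ:ℝ):ℂ) * I) * g x) w
        = deriv (fun x => x / (1 - a * x)) w := by
      apply Filter.EventuallyEq.deriv_eq
      filter_upwards [isOpen_ball.mem_nhds hw] with x hx using hshear x hx
    have hL : deriv (fun x => h x + Complex.exp (-((2*γ:ℝ):ℂ) * I) * g x) w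
        = deriv h w + Complex.exp (-((2*γ:ℝ):ℂ) * I) * deriv g w := by
      rw [deriv_fun_add (hdh w hw) ((hdg w hw).const_mul _), deriv_const_mul _ (hdg w hw)]
    have hvd : DifferentiableAt ℂ (fun x : ℂ => 1 - a * x) w := by fun_prop
    have hR : deriv (fun x => x / (1 - a * x)) w
        = (1 * (1 - a*w) - w * (-a)) / (1 - a*w)^2 := by
      rw [deriv_fun_div differentiableAt_fun_id hvd (hu w hw)]
      congr 1
      · rw [deriv_id'']
        congr 1
        have : deriv (fun x : ℂ => 1 - a * x) w = -a := by
          simpa using (((hasDerivAt_id w).const_mul a).const_sub 1).deriv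
        rw [this]
    rw [hL, hR, hdil w hw, e6] at hde
    have huw := hu w hw
    rw [hb]
    field_simp [hane] at hde ⊢
    linear_combination hde
  -- I1 at z and consequences
  have I1 := keyI1 z hz
  have hEne : (1 : ℂ) + b * z^n ≠ 0 := by
    intro h0
    rw [h0] at I1
    simp at I1
  have hAne : deriv h z ≠ 0 := by
    intro h0
    rw [h0] at I1
    simp at I1
  -- I2 : derivative of the constant function
  set A := deriv h z with hA
  set B := deriv (deriv h) z with hB
  clear_value A
  have hPd0 : deriv (fun w => deriv h w * (1 + b * w^n) * (1 - a*w)^2) z = 0 := by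
    have hconst : (fun w => deriv h w * (1 + b * w^n) * (1 - a*w)^2)
        =ᶠ[nhds z] fun _ => (1:ℂ) := by
      filter_upwards [hmem] with w hw using keyI1 w hw
    rw [hconst.deriv_eq]
    simp
  have d1 : deriv (fun w : ℂ => 1 + b * w^n) z = b * (n * z^(n-1)) := by
    simp
  have d2 : deriv (fun w : ℂ => (1 - a*w)^2) z = 2 * (1 - a*z) * (-a) := by
    have h1 : HasDerivAt (fun w : ℂ => 1 - a*w) (-a) z := by
      simpa using ((hasDerivAt_id z).const_mul a).const_sub 1
    have h2 := h1.pow 2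
    rw [show (fun w : ℂ => (1 - a*w)^2) = (fun w : ℂ => 1 - a*w)^2 from rfl, h2.deriv]
    norm_num
  have hd1' : DifferentiableAt ℂ (fun w : ℂ => 1 + b * w^n) z := by fun_prop
  have hd2' : DifferentiableAt ℂ (fun w : ℂ => (1 - a*w)^2) z := by fun_prop
  have I2 : B * (1 + b * z^n) * (1 - a*z)^2 + A * (b * (n * z^(n-1))) * (1 - a*z)^2
      + A * (1 + b * z^n) * (2 * (1 - a*z) * (-a)) = 0 := by
    rw [← hPd0, deriv_fun_mul (hdh'.fun_mul hd1') hd2', deriv_fun_mul hdh' hd1', d1, d2, ← hA]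
    ring
  -- derivative of f0convH
  have dH : deriv (f0convH h) z = (2*A + z*B)/2 := by
    unfold f0convH
    rw [deriv_div_const, deriv_fun_add (hdh z hz) (differentiableAt_fun_id.fun_mul hdh'),
      deriv_fun_mul differentiableAt_fun_id hdh', deriv_id'', ← hA]
    ring
  -- derivative of f0convG
  have hGpp : deriv (deriv g) z = Q * ((n:ℂ) * z^(n-1) * A + z^n * B) := by
    have heq : deriv g =ᶠ[nhds z] fun w => Q * w^n * deriv h w := by
      filter_upwards [hmem] with w hw using hdil w hw
    rw [heq.deriv_eq]
    have hp : DifferentiableAt ℂ (fun w : ℂ => Q * w^n) z := by fun_prop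
    rw [show (fun w => Q * w^n * deriv h w) = fun w => (fun x : ℂ => Q * x^n) w * deriv h w
        from rfl, deriv_fun_mul hp hdh']
    have : deriv (fun w : ℂ => Q * w^n) z = Q * (n * z^(n-1)) := by simp
    rw [this, ← hA]
    ring
  have dG : deriv (f0convG g) z = -(z * (Q * ((n:ℂ) * z^(n-1) * A + z^n * B)))/2 := by
    unfold f0convG
    rw [deriv_div_const, deriv_fun_sub (hdg z hz) (differentiableAt_fun_id.fun_mul hdg'),
      deriv_fun_mul differentiableAt_fun_id hdg', deriv_id'', hGpp]
    ring
  -- conclude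
  rw [dH] at hne
  have hne' : 2*A + z*B ≠ 0 := by
    intro h0
    apply hne
    rw [h0]
    simp
  rw [e1, e4] at hDne
  rw [dH, dG, e1, e2, e3, e4, e5]
  have huz := hu z hz
  rw [← mul_div_assoc, div_eq_div_iff hne hDne]
  rw [hb] at I2 ⊢
  clear_value B
  rcases hn with rfl | rfl
  · field_simp [hane, hQne] at I2 ⊢
    have I3 : B*(a^2+Q*z)*(1-a*z) + A*Q*(1-a*z) - A*(a^2+Q*z)*(2*a) = 0 := by
      have h0 : (1-a*z) * (B*(a^2+Q*z)*(1-a*z) + A*Q*(1-a*z) - A*(a^2+Q*z)*(2*a)) = 0 := by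
        linear_combination I2
      exact (mul_eq_zero.1 h0).resolve_left huz
    linear_combination (-z^2) * I3
  · field_simp [hane, hQne] at I2 ⊢
    ring
end

section
/- Let γ ∈ ℝ and let n ≥ 3 be an integer. Define the rational function ω̃(z) = −zⁿ e^{−iγ} · (z^{n+1} + e^{2iγ}(n/2 − 1) z − (n/2) e^{iγ}) / (1 + e^{−2iγ}(n/2 − 1) zⁿ − (n/2) e^{−iγ} z^{n+1}), which is the dilatation of f₀ ∗ f when f ∈ S⁰(H_γ) has dilatation ω(z) = −zⁿ. Then there exists z₀ ∈ 𝔻 such that the denominator 1 + e^{−2iγ}(n/2 − 1) z₀ⁿ − (n/2) e^{−iγ} z₀^{n+1} is nonzero and |ω̃(z₀)| > 1. -/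
open Complex Metric Set

section DilatationAux

open Polynomial Filter

noncomputable section


private def rfl' (z : ℂ) : ℂ := ((starRingEnd ℂ) z)⁻¹

private lemma rfl'_rfl' (z : ℂ) : rfl' (rfl' z) = z := by
  simp [rfl', map_inv₀]

private lemma rfl'_inj : Function.Injective rfl' :=
  Function.LeftInverse.injective rfl'_rfl'

private lemma abs_rfl' (z : ℂ) : ‖rfl' z‖ = (‖z‖)⁻¹ := by
  simp [rfl', map_inv₀]

private def Av (γ : ℝ) : ℂ := Complex.exp ((γ:ℂ) * Complex.I)

private lemma Av_ne (γ : ℝ) : Av γ ≠ 0 := Complex.exp_ne_zero _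
private lemma abs_Av (γ : ℝ) : ‖Av γ‖ = 1 := Complex.norm_exp_ofReal_mul_I γ

private def Dp (γ : ℝ) (n : ℕ) : ℂ[X] :=
  C (-((n:ℂ)/2) * (Av γ)⁻¹) * X^(n+1) + (C ((Av γ ^ 2)⁻¹ * ((n:ℂ)/2 - 1)) * X^n + C 1)

private def Ds (γ : ℝ) (n : ℕ) : ℂ[X] :=
  X^(n+1) + (C (Av γ ^ 2 * ((n:ℂ)/2 - 1)) * X + C (-((n:ℂ)/2) * Av γ))

private lemma c2_ne (γ : ℝ) (n : ℕ) (hn : 3 ≤ n) : -((n:ℂ)/2) * (Av γ)⁻¹ ≠ 0 := by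
  have h1 : (n:ℂ) ≠ 0 := Nat.cast_ne_zero.mpr (by omega)
  field_simp [Av_ne]
  simp [h1, Av_ne]

private lemma deg_lt (γ : ℝ) (n : ℕ) (hn : 3 ≤ n) :
    (C ((Av γ ^ 2)⁻¹ * ((n:ℂ)/2 - 1)) * X^n + C 1).degree < ((n+1 : ℕ) : WithBot ℕ) := by
  refine lt_of_le_of_lt (degree_add_le _ _) (max_lt ?_ ?_)
  · exact lt_of_le_of_lt (degree_C_mul_X_pow_le _ _) (by exact_mod_cast (by omega : n < n+1))
  · exact lt_of_le_of_lt degree_C_le (by exact_mod_cast (by omega : 0 < n+1))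

private lemma degree_Dp (γ : ℝ) (n : ℕ) (hn : 3 ≤ n) : (Dp γ n).degree = (n+1 : ℕ) := by
  unfold Dp
  rw [degree_add_eq_left_of_degree_lt, degree_C_mul_X_pow _ (c2_ne γ n hn)]
  rw [degree_C_mul_X_pow _ (c2_ne γ n hn)]
  exact deg_lt γ n hn

private lemma natDegree_Dp (γ : ℝ) (n : ℕ) (hn : 3 ≤ n) : (Dp γ n).natDegree = n+1 :=
  natDegree_eq_of_degree_eq_some (degree_Dp γ n hn)

private lemma leadingCoeff_Dp (γ : ℝ) (n : ℕ) (hn : 3 ≤ n) :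
    (Dp γ n).leadingCoeff = -((n:ℂ)/2) * (Av γ)⁻¹ := by
  unfold Dp
  rw [leadingCoeff_add_of_degree_lt', leadingCoeff_C_mul_X_pow]
  rw [degree_C_mul_X_pow _ (c2_ne γ n hn)]
  exact deg_lt γ n hn

private lemma c2'_ne (γ : ℝ) (n : ℕ) (hn : 3 ≤ n) : -((n:ℂ)/2) * Av γ ≠ 0 := by
  have h1 : (n:ℂ) ≠ 0 := Nat.cast_ne_zero.mpr (by omega)
  field_simp [Av_ne]
  simp [h1, Av_ne]

private lemma eval_zero_Dp (γ : ℝ) (n : ℕ) (hn : 3 ≤ n) : (Dp γ n).eval 0 = 1 := by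
  simp [Dp, zero_pow]
  exact Or.inr (by omega)

private lemma Dp_ne (γ : ℝ) (n : ℕ) (hn : 3 ≤ n) : Dp γ n ≠ 0 := by
  intro h
  have := eval_zero_Dp γ n hn
  rw [h] at this
  simp at this

private lemma Ds_eval_zero (γ : ℝ) (n : ℕ) : (Ds γ n).eval 0 = -((n:ℂ)/2) * Av γ := by
  simp [Ds]

private lemma Ds_ne (γ : ℝ) (n : ℕ) (hn : 3 ≤ n) : Ds γ n ≠ 0 := by
  intro h
  have h2 := Ds_eval_zero γ n
  rw [h] at h2
  simp at h2
  rcases h2 with h2 | h2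
  · omega
  · exact Av_ne γ h2

private lemma zero_not_root (γ : ℝ) (n : ℕ) (hn : 3 ≤ n) : (0:ℂ) ∉ (Dp γ n).roots := by
  intro h
  have := (mem_roots (Dp_ne γ n hn)).mp h
  rw [IsRoot, eval_zero_Dp γ n hn] at this
  exact one_ne_zero this

private lemma conj_Av (γ : ℝ) : (starRingEnd ℂ) (Av γ) = (Av γ)⁻¹ := by
  rw [Av, ← Complex.exp_conj, ← Complex.exp_neg]
  congr 1
  simp [Complex.conj_I]

private lemma card_roots_Dp (γ : ℝ) (n : ℕ) (hn : 3 ≤ n) :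
    Multiset.card (Dp γ n).roots = n + 1 := by
  rw [← natDegree_Dp γ n hn]
  exact splits_iff_card_roots.mp (IsAlgClosed.splits _)

private lemma fact_Dp (γ : ℝ) (n : ℕ) (hn : 3 ≤ n) :
    Dp γ n = C (-((n:ℂ)/2) * (Av γ)⁻¹) *
      ((Dp γ n).roots.map (fun ρ => X - C ρ)).prod := by
  have h := (IsAlgClosed.splits (Dp γ n)).eq_prod_roots
  rw [leadingCoeff_Dp γ n hn] at h
  exact h

private lemma prod_abs_roots (γ : ℝ) (n : ℕ) (hn : 3 ≤ n) :
    ((Dp γ n).roots.map (fun x => ‖x‖)).prod = 2 / n := by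
  have h := congrArg (fun p => ‖eval 0 p‖) (fact_Dp γ n hn)
  simp only [eval_zero_Dp γ n hn, eval_mul, eval_C, eval_multiset_prod, Multiset.map_map,
    Function.comp_def, eval_sub, eval_X, eval_C, zero_sub, map_one, map_mul, norm_one, norm_mul] at h
  rw [show ∀ s : Multiset ℂ, ‖s.prod‖ = (s.map (fun x => ‖x‖)).prod from fun s => map_multiset_prod (normHom : ℂ →*₀ ℝ) s, Multiset.map_map] at h
  have h2 : ((Dp γ n).roots.map (fun ρ => ‖-ρ‖)) = (Dp γ n).roots.map (fun x => ‖x‖) := by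
    simp
  rw [Function.comp_def] at h
  rw [h2] at h
  have habs1 : ‖-((n:ℂ)/2)‖ = n/2 := by
    rw [norm_neg, norm_div]
    simp
  have habs2 : ‖(Av γ)⁻¹‖ = 1 := by
    rw [norm_inv, Av, Complex.norm_exp_ofReal_mul_I]
    norm_num
  rw [habs1, habs2] at h
  have hnR : (n:ℝ) ≠ 0 := Nat.cast_ne_zero.mpr (by omega)
  field_simp at h ⊢
  linarith [h]

private lemma Ds_eq (γ : ℝ) (n : ℕ) (hn : 3 ≤ n) :
    Ds γ n = C ((starRingEnd ℂ) (-((n:ℂ)/2) * (Av γ)⁻¹) *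
        ((Dp γ n).roots.map (fun ρ => -((starRingEnd ℂ) ρ))).prod) *
      ((Dp γ n).roots.map (fun ρ => X - C (rfl' ρ))).prod := by
  apply eq_of_infinite_eval_eq
  refine ((Set.finite_singleton (0:ℂ)).infinite_compl).mono ?_
  intro z hz
  simp only [Set.mem_compl_iff, Set.mem_singleton_iff] at hz
  simp only [Set.mem_setOf_eq]
  have hcz : (starRingEnd ℂ) z ≠ 0 := by simpa
  have h0R := zero_not_root γ n hn
  -- step 1 : explicit identity
  have h1 : eval z (Ds γ n) =
      z^(n+1) * (starRingEnd ℂ) (eval (((starRingEnd ℂ) z)⁻¹) (Dp γ n)) := by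
    simp only [Ds, Dp, eval_add, eval_mul, eval_pow, eval_X, eval_C]
    simp only [Ds, Dp, eval_add, eval_mul, eval_pow, eval_X, eval_C, eval_neg, eval_one, map_add,
      map_mul, map_pow, map_sub, map_one, map_inv₀, map_neg, map_div₀, Complex.conj_conj,
      map_natCast, map_ofNat, conj_Av, inv_inv, Complex.conj_ofNat]
    field_simp
    simp only [one_div, inv_pow]
    field_simp
    ring
  -- step 2 : factored form of the inner eval
  have h2 : (starRingEnd ℂ) (eval (((starRingEnd ℂ) z)⁻¹) (Dp γ n)) =
      (starRingEnd ℂ) (-((n:ℂ)/2) * (Av γ)⁻¹) *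
        ((Dp γ n).roots.map (fun ρ => z⁻¹ - (starRingEnd ℂ) ρ)).prod := by
    conv_lhs => rw [fact_Dp γ n hn]
    rw [eval_mul, eval_C, eval_multiset_prod, Multiset.map_map, map_mul,
      map_multiset_prod (starRingEnd ℂ), Multiset.map_map]
    congr 1
    refine congrArg Multiset.prod (Multiset.map_congr rfl ?_)
    intro ρ hρ
    simp [Complex.conj_conj]
  -- step 3 : redistribute z^(n+1)
  have h3 : z^(n+1) * ((Dp γ n).roots.map (fun ρ => z⁻¹ - (starRingEnd ℂ) ρ)).prod =
      ((Dp γ n).roots.map (fun ρ => -((starRingEnd ℂ) ρ))).prod *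
        ((Dp γ n).roots.map (fun ρ => z - rfl' ρ)).prod := by
    have hzpow : z^(n+1) = ((Dp γ n).roots.map (fun _ => z)).prod := by
      rw [Multiset.map_const', Multiset.prod_replicate, card_roots_Dp γ n hn]
    rw [hzpow, ← Multiset.prod_map_mul, ← Multiset.prod_map_mul]
    refine congrArg Multiset.prod (Multiset.map_congr rfl ?_)
    intro ρ hρ
    have hρ0 : ρ ≠ 0 := fun h => h0R (h ▸ hρ)
    have hcρ : (starRingEnd ℂ) ρ ≠ 0 := by simpa
    rw [rfl']
    field_simp
    ring
  have h4 : eval z (C ((starRingEnd ℂ) (-((n:ℂ)/2) * (Av γ)⁻¹) *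
        ((Dp γ n).roots.map (fun ρ => -((starRingEnd ℂ) ρ))).prod) *
      ((Dp γ n).roots.map (fun ρ => X - C (rfl' ρ))).prod) =
      ((starRingEnd ℂ) (-((n:ℂ)/2) * (Av γ)⁻¹) *
        ((Dp γ n).roots.map (fun ρ => -((starRingEnd ℂ) ρ))).prod) *
        ((Dp γ n).roots.map (fun ρ => z - rfl' ρ)).prod := by
    rw [eval_mul, eval_C, eval_multiset_prod, Multiset.map_map]
    congr 1
    refine congrArg Multiset.prod (Multiset.map_congr rfl ?_)
    intro ρ hρ
    simp
  rw [h1, h2, h4]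
  linear_combination (starRingEnd ℂ) (-((n:ℂ)/2) * (Av γ)⁻¹) * h3

private lemma roots_Ds (γ : ℝ) (n : ℕ) (hn : 3 ≤ n) :
    (Ds γ n).roots = (Dp γ n).roots.map rfl' := by
  have h0R := zero_not_root γ n hn
  have hw : (starRingEnd ℂ) (-((n:ℂ)/2) * (Av γ)⁻¹) *
      ((Dp γ n).roots.map (fun ρ => -((starRingEnd ℂ) ρ))).prod ≠ 0 := by
    apply mul_ne_zero
    · simpa using c2_ne γ n hn
    · apply Multiset.prod_ne_zero
      intro h0
      obtain ⟨ρ, hρ, hval⟩ := Multiset.mem_map.mp h0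
      apply h0R
      have : ρ = 0 := by
        have h2 : (starRingEnd ℂ) ρ = 0 := neg_eq_zero.mp hval
        simpa using h2
      exact this ▸ hρ
  rw [Ds_eq γ n hn, roots_C_mul _ hw,
    show ((Dp γ n).roots.map (fun ρ => X - C (rfl' ρ))) =
      ((Dp γ n).roots.map rfl').map (fun a => X - C a) from by rw [Multiset.map_map]; rfl,
    roots_multiset_prod_X_sub_C]

private lemma count_roots_Ds (γ : ℝ) (n : ℕ) (hn : 3 ≤ n) (σ : ℂ) :
    (Ds γ n).roots.count σ = (Dp γ n).roots.count (rfl' σ) := by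
  classical
  rw [roots_Ds γ n hn]
  conv_lhs => rw [show σ = rfl' (rfl' σ) from (rfl'_rfl' σ).symm]
  exact Multiset.count_map_eq_count' rfl' _ rfl'_inj _

private lemma exists_good_root (γ : ℝ) (n : ℕ) (hn : 3 ≤ n) :
    ∃ ρ ∈ (Dp γ n).roots, ‖ρ‖ < 1 ∧
      rootMultiplicity ρ (Ds γ n) < rootMultiplicity ρ (Dp γ n) := by
  classical
  by_contra hcon
  push_neg at hcon
  set R := (Dp γ n).roots with hR
  have h0R := zero_not_root γ n hn
  set S := R.filter (fun ρ => ‖ρ‖ < 1) with hSdef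
  set T := R.filter (fun ρ => ¬ ‖ρ‖ < 1) with hTdef
  have hST : S + T = R := Multiset.filter_add_not _ _
  have hle : S.map rfl' ≤ T := by
    rw [Multiset.le_iff_count]
    intro σ
    have hc1 : (S.map rfl').count σ = S.count (rfl' σ) := by
      conv_lhs => rw [show σ = rfl' (rfl' σ) from (rfl'_rfl' σ).symm]
      exact Multiset.count_map_eq_count' rfl' _ rfl'_inj _
    rw [hc1]
    by_cases hmem : rfl' σ ∈ S
    · have hmem' := hmem
      rw [hSdef] at hmem'
      have hmemR : rfl' σ ∈ R := (Multiset.mem_filter.mp hmem').1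
      have habs : ‖rfl' σ‖ < 1 := (Multiset.mem_filter.mp hmem').2
      have hne0 : rfl' σ ≠ 0 := fun h => h0R (h ▸ hmemR)
      have hσ0 : σ ≠ 0 := by
        intro h
        apply hne0
        rw [h, rfl']
        simp
      have habsσpos : 0 < ‖σ‖ := by
        simpa [norm_pos_iff] using hσ0
      have hinv : (‖σ‖)⁻¹ < 1 := by rw [← abs_rfl']; exact habs
      have hσ : ¬ ‖σ‖ < 1 := by
        have h1 : ‖σ‖ * (‖σ‖)⁻¹ = 1 := mul_inv_cancel₀ (ne_of_gt habsσpos)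
        intro hlt
        nlinarith
      have e1 : S.count (rfl' σ) = R.count (rfl' σ) := by
        rw [hSdef]
        exact Multiset.count_filter_of_pos (p := fun ρ => ‖ρ‖ < 1) habs
      have e2 : T.count σ = R.count σ := by
        rw [hTdef]
        exact Multiset.count_filter_of_pos (p := fun ρ => ¬ ‖ρ‖ < 1) hσ
      have e3 := hcon (rfl' σ) hmemR habs
      rw [← count_roots, ← count_roots, count_roots_Ds γ n hn (rfl' σ), rfl'_rfl', ← hR] at e3
      omega
    · rw [Multiset.count_eq_zero_of_notMem hmem]
      exact Nat.zero_le _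
  -- products
  have habsR : ((S.map (fun x => ‖x‖)).prod) * ((T.map (fun x => ‖x‖)).prod) = 2 / n := by
    rw [← Multiset.prod_add, ← Multiset.map_add, hST, prod_abs_roots γ n hn]
  have hUle : (S.map rfl').map (fun x => ‖x‖) ≤ T.map (fun x => ‖x‖) := Multiset.map_le_map hle
  obtain ⟨V, hV⟩ := Multiset.le_iff_exists_add.mp hUle
  have hVT : ∀ x ∈ T.map (fun x => ‖x‖), (1:ℝ) ≤ x := by
    intro x hx
    obtain ⟨σ, hσT, rfl⟩ := Multiset.mem_map.mp hx
    rw [hTdef] at hσT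
    have h2 := (Multiset.mem_filter.mp hσT).2
    linarith [not_lt.mp h2]
  have hV1 : (1:ℝ) ≤ V.prod := by
    apply Multiset.one_le_prod
    intro x hx
    exact hVT x (hV ▸ Multiset.mem_add.mpr (Or.inr hx))
  have hU0 : (0:ℝ) ≤ ((S.map rfl').map (fun x => ‖x‖)).prod := by
    apply Multiset.prod_nonneg
    intro x hx
    obtain ⟨σ, _, rfl⟩ := Multiset.mem_map.mp hx
    exact norm_nonneg _
  have hTU : ((S.map rfl').map (fun x => ‖x‖)).prod ≤ (T.map (fun x => ‖x‖)).prod := by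
    rw [hV, Multiset.prod_add]
    nlinarith
  have hSU : ((S.map (fun x => ‖x‖)).prod) * (((S.map rfl').map (fun x => ‖x‖)).prod) = 1 := by
    rw [Multiset.map_map, ← Multiset.prod_map_mul]
    have : S.map (fun ρ => ‖ρ‖ * ((fun x => ‖x‖) ∘ rfl') ρ) = S.map (fun _ => (1:ℝ)) := by
      apply Multiset.map_congr rfl
      intro ρ hρ
      rw [hSdef] at hρ
      have hρ0 : ρ ≠ 0 := fun h => h0R (h ▸ (Multiset.mem_filter.mp hρ).1)
      have : ‖ρ‖ ≠ 0 := by simpa using hρ0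
      simp [Function.comp, abs_rfl', this]
    rw [this, Multiset.map_const', Multiset.prod_replicate, one_pow]
  have hS0 : (0:ℝ) ≤ (S.map (fun x => ‖x‖)).prod := by
    apply Multiset.prod_nonneg
    intro x hx
    obtain ⟨σ, _, rfl⟩ := Multiset.mem_map.mp hx
    exact norm_nonneg _
  have hfinal : (1:ℝ) ≤ 2 / n := by
    calc (1:ℝ) = (S.map (fun x => ‖x‖)).prod * ((S.map rfl').map (fun x => ‖x‖)).prod := hSU.symm
    _ ≤ (S.map (fun x => ‖x‖)).prod * (T.map (fun x => ‖x‖)).prod :=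
        mul_le_mul_of_nonneg_left hTU hS0
    _ = 2 / n := habsR
  have hnR : (3:ℝ) ≤ n := by exact_mod_cast hn
  have : 2 / (n:ℝ) ≤ 2/3 := by
    apply div_le_div_of_nonneg_left <;> linarith
  linarith

end
end DilatationAux

section
open Polynomial Filter

/-- Example 2.4: for `n ≥ 3`, the rational function
`ω̃(z) = −zⁿ e^{−iγ} (z^{n+1} + e^{2iγ}(n/2 − 1) z − (n/2) e^{iγ}) /
          (1 + e^{−2iγ}(n/2 − 1) zⁿ − (n/2) e^{−iγ} z^{n+1})`
(the dilatation of `f₀ ∗ f` when `f ∈ S⁰(H_γ)` has dilatation `ω(z) = −zⁿ`)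
exceeds `1` in modulus somewhere in the unit disk. -/
theorem dilatation_exceeds_one_for_large_n
    (γ : ℝ) (n : ℕ) (hn : 3 ≤ n) :
    ∃ z₀ ∈ Metric.ball (0:ℂ) 1,
      (1 + Complex.exp (-(2*γ : ℝ) * Complex.I) * ((n:ℂ)/2 - 1) * z₀^n
          - (n:ℂ)/2 * Complex.exp (-(γ : ℝ) * Complex.I) * z₀^(n+1)) ≠ 0 ∧
      1 < ‖
        (-z₀^n * Complex.exp (-(γ : ℝ) * Complex.I) *
          ((z₀^(n+1) + Complex.exp ((2*γ : ℝ) * Complex.I) * ((n:ℂ)/2 - 1) * z₀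
              - (n:ℂ)/2 * Complex.exp ((γ : ℝ) * Complex.I)) /
           (1 + Complex.exp (-(2*γ : ℝ) * Complex.I) * ((n:ℂ)/2 - 1) * z₀^n
              - (n:ℂ)/2 * Complex.exp (-(γ : ℝ) * Complex.I) * z₀^(n+1))))‖ := by
  classical
  -- exponential rewrites
  have hE1 : Complex.exp (-(γ : ℝ) * Complex.I) = (Av γ)⁻¹ := by
    rw [Av, ← Complex.exp_neg]
    congr 1
    push_cast
    ring
  have hE2 : Complex.exp (-(2*γ : ℝ) * Complex.I) = (Av γ ^ 2)⁻¹ := by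
    rw [Av, sq, ← Complex.exp_add, ← Complex.exp_neg]
    congr 1
    push_cast
    ring
  have hE3 : Complex.exp ((2*γ : ℝ) * Complex.I) = Av γ ^ 2 := by
    rw [Av, sq, ← Complex.exp_add]
    congr 1
    push_cast
    ring
  have hE4 : Complex.exp ((γ : ℝ) * Complex.I) = Av γ := rfl
  obtain ⟨ρ, hρR, hρlt, hkm⟩ := exists_good_root γ n hn
  have hρ0 : ρ ≠ 0 := fun h => zero_not_root γ n hn (h ▸ hρR)
  set m := rootMultiplicity ρ (Dp γ n) with hm
  set k := rootMultiplicity ρ (Ds γ n) with hk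
  set D₁ := (Dp γ n) /ₘ (X - C ρ)^m with hD₁
  set E := (Ds γ n) /ₘ (X - C ρ)^k with hE
  have hfacD : (X - C ρ)^m * D₁ = Dp γ n := pow_mul_divByMonic_rootMultiplicity_eq _ _
  have hfacE : (X - C ρ)^k * E = Ds γ n := pow_mul_divByMonic_rootMultiplicity_eq _ _
  have hD₁ρ : D₁.eval ρ ≠ 0 := eval_divByMonic_pow_rootMultiplicity_ne_zero ρ (Dp_ne γ n hn)
  have hEρ : E.eval ρ ≠ 0 := eval_divByMonic_pow_rootMultiplicity_ne_zero ρ (Ds_ne γ n hn)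
  -- the quantity we control
  set F : ℂ → ℝ := fun z => (‖z‖ ^ n * ‖E.eval z‖) *
    ((‖z - ρ‖ ^ (m - k) * ‖D₁.eval z‖)⁻¹) with hF
  -- numerator tendsto
  have hnum : Filter.Tendsto (fun z : ℂ => ‖z‖ ^ n * ‖E.eval z‖)
      (nhdsWithin ρ {ρ}ᶜ) (nhds (‖ρ‖ ^ n * ‖E.eval ρ‖)) := by
    apply Filter.Tendsto.mono_left _ nhdsWithin_le_nhds
    exact ((continuous_norm.pow n).mul (continuous_norm.comp E.continuous)).continuousAt
  have hLpos : 0 < ‖ρ‖ ^ n * ‖E.eval ρ‖ := by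
    apply mul_pos
    · exact pow_pos (norm_pos_iff.mpr hρ0) n
    · exact norm_pos_iff.mpr hEρ
  -- denominator tendsto 0 from the right
  have hevD₁ : ∀ᶠ z in nhdsWithin ρ {ρ}ᶜ, D₁.eval z ≠ 0 :=
    Filter.Eventually.filter_mono nhdsWithin_le_nhds (D₁.continuous.continuousAt.eventually_ne hD₁ρ)
  have hdenom : Filter.Tendsto (fun z : ℂ => ‖z - ρ‖ ^ (m - k) * ‖D₁.eval z‖)
      (nhdsWithin ρ {ρ}ᶜ) (nhdsWithin 0 (Set.Ioi 0)) := by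
    rw [tendsto_nhdsWithin_iff]
    constructor
    · apply Filter.Tendsto.mono_left _ nhdsWithin_le_nhds
      have hc : Continuous (fun z : ℂ => ‖z - ρ‖ ^ (m - k) * ‖D₁.eval z‖) := by
        exact ((continuous_norm.comp (continuous_id.sub continuous_const)).pow _).mul
          (continuous_norm.comp D₁.continuous)
      have hca := hc.continuousAt (x := ρ)
      simpa [ContinuousAt, sub_self, zero_pow (Nat.sub_ne_zero_of_lt hkm)] using hca
    · filter_upwards [hevD₁, self_mem_nhdsWithin] with z hz1 hz2
      have hzρ : z - ρ ≠ 0 := sub_ne_zero.mpr hz2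
      have : 0 < ‖z - ρ‖ := norm_pos_iff.mpr hzρ
      have h2 : 0 < ‖D₁.eval z‖ := norm_pos_iff.mpr hz1
      rw [Set.mem_Ioi]
      positivity
  have hFtop : Filter.Tendsto F (nhdsWithin ρ {ρ}ᶜ) Filter.atTop :=
    Filter.Tendsto.pos_mul_atTop hLpos hnum hdenom.inv_tendsto_nhdsGT_zero
  -- assemble eventual facts
  have hball : ∀ᶠ z in nhdsWithin ρ {ρ}ᶜ, z ∈ Metric.ball (0:ℂ) 1 := by
    apply Filter.Eventually.filter_mono nhdsWithin_le_nhds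
    have : Metric.ball (0:ℂ) 1 ∈ nhds ρ := by
      apply Metric.isOpen_ball.mem_nhds
      simpa [Metric.mem_ball, Complex.dist_eq] using hρlt
    exact Filter.eventually_of_mem this (fun z hz => hz)
  have hz0 : ∀ᶠ z in nhdsWithin ρ {ρ}ᶜ, z ≠ 0 :=
    Filter.Eventually.filter_mono nhdsWithin_le_nhds (eventually_ne_nhds hρ0)
  have hgt : ∀ᶠ z in nhdsWithin ρ {ρ}ᶜ, 1 < F z := hFtop.eventually_gt_atTop 1
  obtain ⟨z₀, hz₀all⟩ := (hball.and (hevD₁.and (hz0.and (hgt.and self_mem_nhdsWithin)))).exists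
  obtain ⟨hz₀ball, hz₀D₁, hz₀ne0, hz₀gt, hz₀neρ'⟩ := hz₀all
  have hz₀neρ : z₀ ≠ ρ := hz₀neρ'
  -- now prove the statement with z₀
  refine ⟨z₀, hz₀ball, ?_, ?_⟩
  · -- denominator nonzero
    have hden : (1 + Complex.exp (-(2*γ : ℝ) * Complex.I) * ((n:ℂ)/2 - 1) * z₀^n
        - (n:ℂ)/2 * Complex.exp (-(γ : ℝ) * Complex.I) * z₀^(n+1)) = (Dp γ n).eval z₀ := by
      simp only [hE1, hE2, Dp, eval_add, eval_mul, eval_pow, eval_X, eval_C]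
      ring
    rw [hden, ← hfacD, eval_mul, eval_pow, eval_sub, eval_X, eval_C]
    exact mul_ne_zero (pow_ne_zero _ (sub_ne_zero.mpr hz₀neρ)) hz₀D₁
  · have hden : (1 + Complex.exp (-(2*γ : ℝ) * Complex.I) * ((n:ℂ)/2 - 1) * z₀^n
        - (n:ℂ)/2 * Complex.exp (-(γ : ℝ) * Complex.I) * z₀^(n+1)) = (Dp γ n).eval z₀ := by
      simp only [hE1, hE2, Dp, eval_add, eval_mul, eval_pow, eval_X, eval_C]
      ring
    have hnum' : (z₀^(n+1) + Complex.exp ((2*γ : ℝ) * Complex.I) * ((n:ℂ)/2 - 1) * z₀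
        - (n:ℂ)/2 * Complex.exp ((γ : ℝ) * Complex.I)) = (Ds γ n).eval z₀ := by
      simp only [hE3, hE4, Ds, eval_add, eval_mul, eval_pow, eval_X, eval_C]
      ring
    rw [hden, hnum', hE1]
    rw [norm_mul, norm_mul, norm_neg, norm_pow, norm_inv, abs_Av, norm_div]
    have habsDs : ‖(Ds γ n).eval z₀‖ =
        ‖z₀ - ρ‖ ^ k * ‖E.eval z₀‖ := by
      rw [← hfacE, eval_mul, eval_pow, eval_sub, eval_X, eval_C, norm_mul, norm_pow]
    have habsDp : ‖(Dp γ n).eval z₀‖ =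
        ‖z₀ - ρ‖ ^ m * ‖D₁.eval z₀‖ := by
      rw [← hfacD, eval_mul, eval_pow, eval_sub, eval_X, eval_C, norm_mul, norm_pow]
    rw [habsDs, habsDp]
    have hz₀ρpos : 0 < ‖z₀ - ρ‖ := norm_pos_iff.mpr (sub_ne_zero.mpr hz₀neρ)
    have hz₀D₁pos : 0 < ‖D₁.eval z₀‖ := norm_pos_iff.mpr hz₀D₁
    have hmk : m - k + k = m := by omega
    have hpow : ‖z₀ - ρ‖ ^ m =
        ‖z₀ - ρ‖ ^ (m - k) * ‖z₀ - ρ‖ ^ k := by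
      rw [← pow_add, hmk]
    calc (1:ℝ) < F z₀ := hz₀gt
    _ = ‖z₀‖ ^ n * 1⁻¹ *
        (‖z₀ - ρ‖ ^ k * ‖E.eval z₀‖ /
          (‖z₀ - ρ‖ ^ m * ‖D₁.eval z₀‖)) := by
      simp only [hF]
      rw [hpow]
      field_simp

end
end

section
/- Let γ ∈ ℝ and a ∈ ℂ with |a| < 1, written a = |a| e^{iθ} with θ = arg a. Let P = (2a² + 2a e^{2iγ} + e^{iγ}(1 − |a|²)) / (2(1 + conj(a) e^{2iγ})) (this is the product AB of the negatives of the roots of the quadratic t(z) from the dilatation of f₀ ∗ f). If |a|² (cos²(θ − γ/2) + 9 sin²(θ − γ/2)) ≤ 1, then |P| ≤ 1. -/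
open Complex Real

set_option maxHeartbeats 1000000 in
private theorem aux_ineq2 (r X Y C S : ℝ) (hXY : X^2 + Y^2 = 1) (hCS : C^2 + S^2 = 1)
    (hr0 : 0 ≤ r) (hr1 : r ≤ 1) (hq : r^2 * (X^2 + 9*Y^2) ≤ 1) :
    (1 + (-2)*r*Y*S + 2*r*X*C + (-1)*r^2 + (-2)*r^2*Y^2 + 2*r^2*X^2)^2 + (2*r*Y*C + 2*r*X*S + 4*r^2*X*Y)^2 ≤ (2 + 2*r*Y*S + 2*r*X*C)^2 + ((-2)*r*Y*C + 2*r*X*S)^2 := by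
  have hT : (X*C + 3*Y*S)^2 + (X*S - 3*Y*C)^2 = X^2 + 9*Y^2 := by
    linear_combination (X^2 + 9*Y^2) * hCS
  have hTq : (X*C + 3*Y*S)^2 ≤ X^2 + 9*Y^2 := by
    nlinarith [sq_nonneg (X*S - 3*Y*C)]
  have ht2 : r^2 * (X*C + 3*Y*S)^2 ≤ r^2 * (X^2 + 9*Y^2) :=
    mul_le_mul_of_nonneg_left hTq (sq_nonneg r)
  have hm0 : 0 ≤ r^2 * (X^2 + 9*Y^2) := by positivity
  have hF : 0 ≤ 3 + r^2*(X^2 + 9*Y^2) + 4*r*(X*C + 3*Y*S) := by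
    nlinarith [ht2, hq, hm0, sq_nonneg (1 - r^2*(X^2 + 9*Y^2)), sq_nonneg (r*(X*C + 3*Y*S))]
  have h1r : 0 ≤ 1 - r^2 := by nlinarith
  have key : ((2 + 2*r*Y*S + 2*r*X*C)^2 + ((-2)*r*Y*C + 2*r*X*S)^2) - ((1 + (-2)*r*Y*S + 2*r*X*C + (-1)*r^2 + (-2)*r^2*Y^2 + 2*r^2*X^2)^2 + (2*r*Y*C + 2*r*X*S + 4*r^2*X*Y)^2)
      = (1 - r^2) * (3 + r^2*(X^2 + 9*Y^2) + 4*r*(X*C + 3*Y*S)) := by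
    linear_combination ((-5)*r^2 + (-8)*r^3*Y*S + (-8)*r^3*X*C + 1*r^4 + (-4)*r^4*Y^2 + (-4)*r^4*X^2) * hXY
  linarith [key, mul_nonneg h1r hF]

set_option maxHeartbeats 1000000 in
/-- Lemma 2.6 (first part): if `|a|²(cos²(θ−γ/2) + 9 sin²(θ−γ/2)) ≤ 1` with
`θ = arg a`, `|a| < 1`, then the product `P = AB` of the negatives of the roots
of the quadratic `t(z)` satisfies `|P| ≤ 1`. -/
theorem abs_product_of_roots_le_one
    (γ : ℝ) (a : ℂ) (ha : ‖a‖ < 1)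
    (hineq : (‖a‖)^2 *
        ((Real.cos (a.arg - γ/2))^2 + 9 * (Real.sin (a.arg - γ/2))^2) ≤ 1) :
    ‖((2*a^2 + 2*a * Complex.exp ((2*γ : ℝ) * Complex.I)
          + Complex.exp ((γ : ℝ) * Complex.I) * (1 - (‖a‖ : ℂ)^2)) /
        (2 * (1 + (starRingEnd ℂ) a * Complex.exp ((2*γ : ℝ) * Complex.I))))‖ ≤ 1 := by
  set r := ‖a‖ with hr
  set θ := a.arg with hθ
  have hr0 : (0:ℝ) ≤ r := norm_nonneg a
  have hr1 : r ≤ 1 := le_of_lt ha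
  have hexp : ∀ x : ℝ, Complex.exp ((x:ℂ) * Complex.I)
      = ((Real.cos x : ℝ) : ℂ) + ((Real.sin x : ℝ) : ℂ) * Complex.I := fun x => by
    rw [Complex.exp_mul_I, Complex.ofReal_cos, Complex.ofReal_sin]
  have ha' : a = (r : ℂ) * (((Real.cos θ : ℝ) : ℂ) + ((Real.sin θ : ℝ) : ℂ) * Complex.I) := by
    rw [Complex.ofReal_cos, Complex.ofReal_sin]
    exact (Complex.norm_mul_cos_add_sin_mul_I a).symm
  have hc1 : Real.cos γ = Real.cos (γ/2)^2 - Real.sin (γ/2)^2 := by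
    have h := Real.cos_add (γ/2) (γ/2)
    rw [show γ/2 + γ/2 = γ by ring] at h
    rw [h]; ring
  have hs1 : Real.sin γ = 2*Real.sin (γ/2)*Real.cos (γ/2) := by
    have h := Real.sin_add (γ/2) (γ/2)
    rw [show γ/2 + γ/2 = γ by ring] at h
    rw [h]; ring
  have hc2 : Real.cos (2*γ) = (Real.cos (γ/2)^2 - Real.sin (γ/2)^2)^2
      - (2*Real.sin (γ/2)*Real.cos (γ/2))^2 := by
    have h := Real.cos_add γ γ
    rw [show γ + γ = 2*γ by ring] at h
    rw [h, hc1, hs1]; ring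
  have hs2 : Real.sin (2*γ) = 2*(Real.cos (γ/2)^2 - Real.sin (γ/2)^2)
      * (2*Real.sin (γ/2)*Real.cos (γ/2)) := by
    have h := Real.sin_add γ γ
    rw [show γ + γ = 2*γ by ring] at h
    rw [h, hc1, hs1]; ring
  have hc3 : Real.cos (3*γ/2) = (Real.cos (γ/2)^2 - Real.sin (γ/2)^2) * Real.cos (γ/2)
      - (2*Real.sin (γ/2)*Real.cos (γ/2)) * Real.sin (γ/2) := by
    have h := Real.cos_add γ (γ/2)
    rw [show γ + γ/2 = 3*γ/2 by ring] at h
    rw [h, hc1, hs1]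
  have hs3 : Real.sin (3*γ/2) = (2*Real.sin (γ/2)*Real.cos (γ/2)) * Real.cos (γ/2)
      + (Real.cos (γ/2)^2 - Real.sin (γ/2)^2) * Real.sin (γ/2) := by
    have h := Real.sin_add γ (γ/2)
    rw [show γ + γ/2 = 3*γ/2 by ring] at h
    rw [h, hc1, hs1]
  have hca : Real.cos θ = Real.cos (θ - γ/2) * Real.cos (γ/2)
      - Real.sin (θ - γ/2) * Real.sin (γ/2) := by
    have h := Real.cos_add (θ - γ/2) (γ/2)
    rw [show θ - γ/2 + γ/2 = θ by ring] at h
    rw [h]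
  have hsa : Real.sin θ = Real.sin (θ - γ/2) * Real.cos (γ/2)
      + Real.cos (θ - γ/2) * Real.sin (γ/2) := by
    have h := Real.sin_add (θ - γ/2) (γ/2)
    rw [show θ - γ/2 + γ/2 = θ by ring] at h
    rw [h]
  have hXY : (Real.cos (θ - γ/2))^2 + (Real.sin (θ - γ/2))^2 = 1 :=
    Real.cos_sq_add_sin_sq _
  have hCS : (Real.cos (3*γ/2))^2 + (Real.sin (3*γ/2))^2 = 1 :=
    Real.cos_sq_add_sin_sq _
  have habs1 : ‖(starRingEnd ℂ) a * Complex.exp (((2*γ : ℝ) : ℂ) * Complex.I)‖ = r := by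
    rw [norm_mul, Complex.norm_conj, Complex.norm_exp_ofReal_mul_I, mul_one]
  have hne : (1 + (starRingEnd ℂ) a * Complex.exp (((2*γ : ℝ) : ℂ) * Complex.I)) ≠ 0 := by
    intro h0
    have h2 : (starRingEnd ℂ) a * Complex.exp (((2*γ : ℝ) : ℂ) * Complex.I) = -1 := by
      linear_combination h0
    have hone : (1:ℝ) = r := by
      rw [← habs1, h2]; simp
    linarith
  have hdne : (2 * (1 + (starRingEnd ℂ) a * Complex.exp (((2*γ : ℝ) : ℂ) * Complex.I))) ≠ 0 :=
    mul_ne_zero two_ne_zero hne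
  rw [norm_div, div_le_one (norm_pos_iff.mpr hdne)]
  have hnum : (2*a^2 + 2*a * Complex.exp (((2*γ : ℝ) : ℂ) * Complex.I)
        + Complex.exp (((γ : ℝ) : ℂ) * Complex.I) * (1 - (r : ℂ)^2))
      = Complex.exp (((γ : ℝ) : ℂ) * Complex.I)
        * (((1 + (-2)*r*(Real.sin (θ - γ/2))*(Real.sin (3*γ/2)) + 2*r*(Real.cos (θ - γ/2))*(Real.cos (3*γ/2)) + (-1)*r^2 + (-2)*r^2*(Real.sin (θ - γ/2))^2 + 2*r^2*(Real.cos (θ - γ/2))^2 : ℝ) : ℂ) + ((2*r*(Real.sin (θ - γ/2))*(Real.cos (3*γ/2)) + 2*r*(Real.cos (θ - γ/2))*(Real.sin (3*γ/2)) + 4*r^2*(Real.cos (θ - γ/2))*(Real.sin (θ - γ/2)) : ℝ) : ℂ) * Complex.I) := by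
    rw [ha', hexp (2*γ), hexp γ, hca, hsa, hc2, hs2, hc1, hs1, hc3, hs3]
    apply Complex.ext <;>
      simp only [Complex.add_re, Complex.add_im, Complex.mul_re, Complex.mul_im,
        Complex.sub_re, Complex.sub_im, Complex.ofReal_re, Complex.ofReal_im,
        Complex.I_re, Complex.I_im, Complex.one_re, Complex.one_im,
        Complex.re_ofNat, Complex.im_ofNat, pow_two] <;>
      ring
  have hden : (2 * (1 + (starRingEnd ℂ) a * Complex.exp (((2*γ : ℝ) : ℂ) * Complex.I)))
      = (((2 + 2*r*(Real.sin (θ - γ/2))*(Real.sin (3*γ/2)) + 2*r*(Real.cos (θ - γ/2))*(Real.cos (3*γ/2)) : ℝ) : ℂ) + (((-2)*r*(Real.sin (θ - γ/2))*(Real.cos (3*γ/2)) + 2*r*(Real.cos (θ - γ/2))*(Real.sin (3*γ/2)) : ℝ) : ℂ) * Complex.I) := by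
    rw [ha', hexp (2*γ), hca, hsa, hc2, hs2, hc3, hs3]
    apply Complex.ext
    · simp only [map_mul, map_add, Complex.conj_ofReal, Complex.conj_I,
        Complex.add_re, Complex.add_im, Complex.mul_re, Complex.mul_im,
        Complex.sub_re, Complex.sub_im, Complex.ofReal_re, Complex.ofReal_im,
        Complex.I_re, Complex.I_im, Complex.one_re, Complex.one_im,
        Complex.re_ofNat, Complex.im_ofNat, Complex.neg_re, Complex.neg_im,
        mul_neg, neg_neg, pow_two]
      linear_combination (2*((-1)*r*(Real.sin (θ - γ/2))*(Real.sin (γ/2))^3 + 3*r*(Real.sin (θ - γ/2))*(Real.cos (γ/2))^2*(Real.sin (γ/2)) + (-3)*r*(Real.cos (θ - γ/2))*(Real.cos (γ/2))*(Real.sin (γ/2))^2 + 1*r*(Real.cos (θ - γ/2))*(Real.cos (γ/2))^3)) * Real.sin_sq_add_cos_sq (γ/2)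
    · simp only [map_mul, map_add, Complex.conj_ofReal, Complex.conj_I,
        Complex.add_re, Complex.add_im, Complex.mul_re, Complex.mul_im,
        Complex.sub_re, Complex.sub_im, Complex.ofReal_re, Complex.ofReal_im,
        Complex.I_re, Complex.I_im, Complex.one_re, Complex.one_im,
        Complex.re_ofNat, Complex.im_ofNat, Complex.neg_re, Complex.neg_im,
        mul_neg, neg_neg, pow_two]
      linear_combination (2*(3*r*(Real.sin (θ - γ/2))*(Real.cos (γ/2))*(Real.sin (γ/2))^2 + (-1)*r*(Real.sin (θ - γ/2))*(Real.cos (γ/2))^3 + (-1)*r*(Real.cos (θ - γ/2))*(Real.sin (γ/2))^3 + 3*r*(Real.cos (θ - γ/2))*(Real.cos (γ/2))^2*(Real.sin (γ/2)))) * Real.sin_sq_add_cos_sq (γ/2)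
  rw [hnum, hden, norm_mul, Complex.norm_exp_ofReal_mul_I, one_mul]
  rw [Complex.norm_def, Complex.norm_def]
  apply Real.sqrt_le_sqrt
  rw [Complex.normSq_add_mul_I, Complex.normSq_add_mul_I]
  exact aux_ineq2 r (Real.cos (θ - γ/2)) (Real.sin (θ - γ/2))
    (Real.cos (3*γ/2)) (Real.sin (3*γ/2)) hXY hCS hr0 hr1 hineq
end

section
/- Let γ ∈ ℝ and a ∈ ℂ with |a| < 1, written a = |a| e^{iθ} with θ = arg a, and assume |a|² (cos²(θ − γ/2) + 9 sin²(θ − γ/2)) ≤ 1. Let P = (2a² + 2a e^{2iγ} + e^{iγ}(1 − |a|²)) / (2(1 + conj(a) e^{2iγ})). Then |P| = 1 if and only if |a| cos(θ − γ/2) = −cos(3γ/2) and 3|a| sin(θ − γ/2) = −sin(3γ/2). -/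
open Complex Real

set_option maxHeartbeats 2000000

/-- Lemma 2.6 (second part): under `|a|²(cos²(θ−γ/2) + 9 sin²(θ−γ/2)) ≤ 1` with
`θ = arg a`, `|a| < 1`, the product `P = AB` has modulus `1` if and only if
`|a| cos(θ−γ/2) = −cos(3γ/2)` and `3|a| sin(θ−γ/2) = −sin(3γ/2)`. -/
theorem abs_product_of_roots_eq_one_iff
    (γ : ℝ) (a : ℂ) (ha : ‖a‖ < 1)
    (hineq : (‖a‖)^2 *
        ((Real.cos (a.arg - γ/2))^2 + 9 * (Real.sin (a.arg - γ/2))^2) ≤ 1) :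
    ‖((2*a^2 + 2*a * Complex.exp ((2*γ : ℝ) * Complex.I)
          + Complex.exp ((γ : ℝ) * Complex.I) * (1 - (‖a‖ : ℂ)^2)) /
        (2 * (1 + (starRingEnd ℂ) a * Complex.exp ((2*γ : ℝ) * Complex.I))))‖ = 1 ↔
    (‖a‖ * Real.cos (a.arg - γ/2) = -Real.cos (3*γ/2) ∧
      3 * ‖a‖ * Real.sin (a.arg - γ/2) = -Real.sin (3*γ/2)) := by
  set r := ‖a‖ with hrdef
  set θ := a.arg with hθdef
  set x := Real.cos (θ - γ/2) with hxdef
  set y := Real.sin (θ - γ/2) with hydef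
  set cg := Real.cos (γ/2) with hcgdef
  set sg := Real.sin (γ/2) with hsgdef
  have hr0 : 0 ≤ r := norm_nonneg a
  have hxy : x^2 + y^2 = 1 := by
    rw [hxdef, hydef]; exact Real.cos_sq_add_sin_sq _
  have hcs : cg^2 + sg^2 = 1 := by
    rw [hcgdef, hsgdef]; exact Real.cos_sq_add_sin_sq _
  have ha0 : (↑r) * (Complex.cos ↑θ + Complex.sin ↑θ * Complex.I) = a :=
    Complex.norm_mul_cos_add_sin_mul_I a
  have hre : a.re = r * (x*cg - y*sg) := by
    rw [← ha0]
    simp only [Complex.mul_re, Complex.ofReal_re, Complex.ofReal_im, Complex.add_re,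
      Complex.cos_ofReal_re, Complex.mul_re, Complex.sin_ofReal_re, Complex.I_re,
      Complex.sin_ofReal_im, Complex.I_im, Complex.add_im, Complex.cos_ofReal_im,
      Complex.mul_im]
    rw [show θ = (θ - γ/2) + (γ/2) by ring, Real.cos_add]
    rw [← hxdef, ← hydef, ← hcgdef, ← hsgdef]; ring
  have him : a.im = r * (y*cg + x*sg) := by
    rw [← ha0]
    simp only [Complex.mul_re, Complex.ofReal_re, Complex.ofReal_im, Complex.add_re,
      Complex.cos_ofReal_re, Complex.mul_re, Complex.sin_ofReal_re, Complex.I_re,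
      Complex.sin_ofReal_im, Complex.I_im, Complex.add_im, Complex.cos_ofReal_im,
      Complex.mul_im]
    rw [show θ = (θ - γ/2) + (γ/2) by ring, Real.sin_add]
    rw [← hxdef, ← hydef, ← hcgdef, ← hsgdef]; ring
  have hcγ : Real.cos γ = cg*cg - sg*sg := by
    rw [show γ = γ/2 + γ/2 by ring, Real.cos_add]
  have hsγ : Real.sin γ = sg*cg + cg*sg := by
    rw [show γ = γ/2 + γ/2 by ring, Real.sin_add]
  have hc2γ : Real.cos (2*γ) = (cg*cg - sg*sg)*(cg*cg - sg*sg) - (sg*cg + cg*sg)*(sg*cg + cg*sg) := by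
    rw [show 2*γ = γ + γ by ring, Real.cos_add, hcγ, hsγ]
  have hs2γ : Real.sin (2*γ) = (sg*cg + cg*sg)*(cg*cg - sg*sg) + (cg*cg - sg*sg)*(sg*cg + cg*sg) := by
    rw [show 2*γ = γ + γ by ring, Real.sin_add, hcγ, hsγ]
  have hc3 : Real.cos (3*γ/2) = cg^3 - 3*cg*sg^2 := by
    rw [show 3*γ/2 = (γ/2 + γ/2) + γ/2 by ring, Real.cos_add, Real.cos_add, Real.sin_add,
      ← hcgdef, ← hsgdef]
    ring
  have hs3 : Real.sin (3*γ/2) = 3*cg^2*sg - sg^3 := by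
    rw [show 3*γ/2 = (γ/2 + γ/2) + γ/2 by ring, Real.sin_add, Real.cos_add, Real.sin_add,
      ← hcgdef, ← hsgdef]
    ring
  set N := 2*a^2 + 2*a * Complex.exp ((2*γ : ℝ) * Complex.I)
          + Complex.exp ((γ : ℝ) * Complex.I) * (1 - (r : ℂ)^2) with hN
  set D := 2 * (1 + (starRingEnd ℂ) a * Complex.exp ((2*γ : ℝ) * Complex.I)) with hD
  have hden : (1 + (starRingEnd ℂ) a * Complex.exp ((2*γ : ℝ) * Complex.I)) ≠ 0 := by
    intro h
    have h1 : ‖(starRingEnd ℂ) a * Complex.exp ((2*γ : ℝ) * Complex.I)‖ = r := by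
      rw [norm_mul, Complex.norm_exp_ofReal_mul_I, Complex.norm_conj, mul_one]
    have h2 : (starRingEnd ℂ) a * Complex.exp ((2*γ : ℝ) * Complex.I) = -1 := by
      linear_combination h
    rw [h2] at h1
    simp at h1
    rw [← h1] at ha
    exact lt_irrefl _ ha
  have hDne : D ≠ 0 := mul_ne_zero two_ne_zero hden
  have hc3' : cg^3 - 3*cg*sg^2 = Real.cos (3*γ/2) := hc3.symm
  have hs3' : 3*cg^2*sg - sg^3 = Real.sin (3*γ/2) := hs3.symm
  have hE : Complex.normSq N - Complex.normSq D =
      (r^2 - 1) * ((1 - r^2*(x^2 + 9*y^2))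
        + 2*((r*x + (cg^3 - 3*cg*sg^2))^2 + (3*r*y + (3*cg^2*sg - sg^3))^2)) := by
    simp only [hN, hD, Complex.normSq_apply, Complex.add_re, Complex.add_im, Complex.mul_re,
      Complex.mul_im, Complex.sub_re, Complex.sub_im, Complex.one_re, Complex.one_im,
      Complex.re_ofNat, Complex.im_ofNat, Complex.exp_ofReal_mul_I_re,
      Complex.exp_ofReal_mul_I_im, Complex.conj_re, Complex.conj_im, pow_two,
      Complex.ofReal_re, Complex.ofReal_im]
    rw [hre, him, hc2γ, hs2γ, hcγ, hsγ]
    linear_combination ((1:ℝ)*r^2 + (4:ℝ)*r^2*sg^4 + (8:ℝ)*r^2*cg^2*sg^2 + (4:ℝ)*r^2*cg^4 + (-8:ℝ)*r^3*y*sg^7 + (8:ℝ)*r^3*y*cg^2*sg^5 + (40:ℝ)*r^3*y*cg^4*sg^3 + (24:ℝ)*r^3*y*cg^6*sg + (-24:ℝ)*r^3*x*cg*sg^6 + (-40:ℝ)*r^3*x*cg^3*sg^4 + (-8:ℝ)*r^3*x*cg^5*sg^2 + (8:ℝ)*r^3*x*cg^7 + (-1:ℝ)*r^4 + (4:ℝ)*r^4*y^2*sg^4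 + (8:ℝ)*r^4*y^2*cg^2*sg^2 + (4:ℝ)*r^4*y^2*cg^4 + (4:ℝ)*r^4*x^2*sg^4 + (8:ℝ)*r^4*x^2*cg^2*sg^2 + (4:ℝ)*r^4*x^2*cg^4) * hxy + ((3:ℝ) + (3:ℝ)*sg^2 + (2:ℝ)*sg^4 + (3:ℝ)*cg^2 + (4:ℝ)*cg^2*sg^2 + (2:ℝ)*cg^4 + (12:ℝ)*r*y*sg^3 + (4:ℝ)*r*y*sg^5 + (-36:ℝ)*r*y*cg^2*sg + (-8:ℝ)*r*y*cg^2*sg^3 + (-12:ℝ)*r*y*cg^4*sg + (12:ℝ)*r*x*cg*sg^2 + (-12:ℝ)*r*x*cg*sg^4 + (-4:ℝ)*r*x*cg^3 + (-8:ℝ)*r*x*cg^3*sg^2 + (4:ℝ)*r*x*cg^5 + (-2:ℝ)*r^2*sg^4 + (-4:ℝ)*r^2*cg^2*sg^2 + (-2:ℝ)*r^2*cg^4 + (-8:ℝ)*r^2*y^2 + (-8:ℝ)*r^2*y^2*sg^2 + (-8:ℝ)*r^2*y^2*cg^2 + (-12:ℝ)*r^3*y*sg^3 + (-12:ℝ)*r^3*y*sg^5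 + (36:ℝ)*r^3*y*cg^2*sg + (24:ℝ)*r^3*y*cg^2*sg^3 + (36:ℝ)*r^3*y*cg^4*sg + (-12:ℝ)*r^3*x*cg*sg^2 + (-12:ℝ)*r^3*x*cg*sg^4 + (4:ℝ)*r^3*x*cg^3 + (-8:ℝ)*r^3*x*cg^3*sg^2 + (4:ℝ)*r^3*x*cg^5 + (1:ℝ)*r^4 + (1:ℝ)*r^4*sg^2 + (1:ℝ)*r^4*cg^2 + (8:ℝ)*r^4*y^2 + (8:ℝ)*r^4*y^2*sg^2 + (8:ℝ)*r^4*y^2*cg^2) * hcs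
  rw [norm_div, div_eq_one_iff_eq (by
    simpa using (norm_ne_zero_iff.mpr hDne : ‖D‖ ≠ 0))]
  rw [Complex.norm_def, Complex.norm_def,
    Real.sqrt_inj (Complex.normSq_nonneg _) (Complex.normSq_nonneg _)]
  rw [← sub_eq_zero, hE]
  have hr1 : r^2 - 1 < 0 := by nlinarith
  constructor
  · intro h
    have hB : (1 - r^2*(x^2 + 9*y^2))
        + 2*((r*x + (cg^3 - 3*cg*sg^2))^2 + (3*r*y + (3*cg^2*sg - sg^3))^2) = 0 := by
      rcases mul_eq_zero.1 h with h' | h'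
      · exact absurd h' (ne_of_lt hr1)
      · exact h'
    have h1 : (r*x + (cg^3 - 3*cg*sg^2))^2 = 0 := by nlinarith [sq_nonneg (3*r*y + (3*cg^2*sg - sg^3))]
    have h2 : (3*r*y + (3*cg^2*sg - sg^3))^2 = 0 := by nlinarith [sq_nonneg (r*x + (cg^3 - 3*cg*sg^2))]
    have h1' := pow_eq_zero_iff (n := 2) (by norm_num) |>.1 h1
    have h2' := pow_eq_zero_iff (n := 2) (by norm_num) |>.1 h2
    constructor
    · rw [← hc3']; linarith
    · rw [← hs3']; linarith
  · rintro ⟨h1, h2⟩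
    rw [← hc3'] at h1
    rw [← hs3'] at h2
    have e1 : r*x + (cg^3 - 3*cg*sg^2) = 0 := by linarith
    have e2 : 3*r*y + (3*cg^2*sg - sg^3) = 0 := by linarith
    have e3 : 1 - r^2*(x^2 + 9*y^2) = 0 := by
      have : (cg^3 - 3*cg*sg^2)^2 + (3*cg^2*sg - sg^3)^2 = 1 := by
        linear_combination (cg^4 + 2*cg^2*sg^2 + sg^4 + cg^2 + sg^2 + 1) * hcs
      linear_combination (-1 : ℝ) * this + ((cg^3 - 3*cg*sg^2) - r*x) * e1 + ((3*cg^2*sg - sg^3) - 3*r*y) * e2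
    rw [e1, e2, e3]
    ring
end

section
/- For all complex numbers A and B, the identity |A(|B|² − 1) + B(|A|² − 1)|² − (1 − |AB|²)² = −(1 − |A|²)(1 − |B|²) |1 − A conj(B)|² holds. Consequently, if |A| < 1 and |AB| < 1, then letting z₀ = (A(|B|² − 1) + B(|A|² − 1))/(1 − |AB|²), one has |B| < 1 if and only if |z₀| < 1, and |B| = 1 if and only if |z₀| = 1. -/
open Complex

lemma cohn_aux (a b c n : ℝ) (hb0 : 0 ≤ b) (hn : 0 ≤ n)
    (ha : a < 1) (ha2 : 0 < 1 - a^2) (hab : a*b < 1) (hab0 : 0 ≤ a*b) (hc : 0 < c)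
    (hid : n^2 - (1 - (a*b)^2)^2 = -(1-a^2)*(1-b^2)*c^2) :
    (b < 1 ↔ n/(1-(a*b)^2) < 1) ∧ (b = 1 ↔ n/(1-(a*b)^2) = 1) := by
  have hd : 0 < 1 - (a*b)^2 := by nlinarith
  rw [div_lt_one hd, div_eq_one_iff_eq (ne_of_gt hd)]
  constructor
  · constructor
    · intro hb
      have h1b2 : 0 < 1 - b^2 := by nlinarith
      have hneg : n^2 < (1-(a*b)^2)^2 := by
        nlinarith [mul_pos (mul_pos ha2 h1b2) (pow_pos hc 2)]
      exact lt_of_pow_lt_pow_left₀ 2 hd.le hneg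
    · intro hlt
      by_contra h
      push_neg at h
      have hneg : n^2 < (1-(a*b)^2)^2 := pow_lt_pow_left₀ hlt hn two_ne_zero
      have hge : 0 ≤ b^2 - 1 := by nlinarith
      nlinarith [mul_nonneg (mul_nonneg ha2.le hge) (sq_nonneg c)]
  · constructor
    · intro hb
      subst hb
      have hsq : n^2 = (1-(a*1)^2)^2 := by nlinarith
      have h1 : n ≤ 1-(a*1)^2 := by nlinarith
      have h2 : 1-(a*1)^2 ≤ n := by nlinarith
      linarith
    · intro heq
      have h0 : n^2 - (1-(a*b)^2)^2 = 0 := by rw [heq]; ring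
      have hprod : (1-a^2)*(1-b^2)*c^2 = 0 := by linarith
      have hb2 : 1 - b^2 = 0 := by
        rcases mul_eq_zero.mp hprod with h | h
        · rcases mul_eq_zero.mp h with h1 | h1
          · nlinarith
          · exact h1
        · nlinarith
      have : (b - 1) * (b + 1) = 0 := by nlinarith
      rcases mul_eq_zero.mp this with h | h
      · linarith
      · linarith

/-- Claim (a) in the proof of Theorem 1.2: the algebraic identity
`|A(|B|²−1) + B(|A|²−1)|² − (1−|AB|²)² = −(1−|A|²)(1−|B|²)|1−A conj B|²`,
and its consequence for the Cohn point `z₀` of a monic quadratic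
`(z+A)(z+B)` when `|A| < 1` and `|AB| < 1`. -/
theorem cohn_point_identity (A B : ℂ) :
    (‖A * ((‖B‖ : ℂ)^2 - 1) + B * ((‖A‖ : ℂ)^2 - 1)‖)^2
        - (1 - (‖A*B‖)^2)^2
      = -(1 - (‖A‖)^2) * (1 - (‖B‖)^2) *
          (‖1 - A * (starRingEnd ℂ) B‖)^2 ∧
    (‖A‖ < 1 → ‖A*B‖ < 1 →
      ((‖B‖ < 1 ↔
          ‖(A * ((‖B‖ : ℂ)^2 - 1) + B * ((‖A‖ : ℂ)^2 - 1)) /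
            (1 - ((‖A*B‖ : ℂ))^2)‖ < 1) ∧
        (‖B‖ = 1 ↔
          ‖(A * ((‖B‖ : ℂ)^2 - 1) + B * ((‖A‖ : ℂ)^2 - 1)) /
            (1 - ((‖A*B‖ : ℂ))^2)‖ = 1))) := by
  have hid : (‖A * ((‖B‖ : ℂ)^2 - 1) + B * ((‖A‖ : ℂ)^2 - 1)‖)^2
        - (1 - (‖A*B‖)^2)^2
      = -(1 - (‖A‖)^2) * (1 - (‖B‖)^2) *
          (‖1 - A * (starRingEnd ℂ) B‖)^2 := by
    simp only [← Complex.ofReal_pow, Complex.sq_norm]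
    simp only [Complex.normSq_apply, Complex.add_re, Complex.add_im, Complex.mul_re,
      Complex.mul_im, Complex.sub_re, Complex.sub_im, Complex.one_re, Complex.one_im,
      Complex.ofReal_re, Complex.ofReal_im, Complex.conj_re, Complex.conj_im]
    ring
  refine ⟨hid, fun hA hAB => ?_⟩
  have hc : 0 < ‖1 - A * (starRingEnd ℂ) B‖ := by
    rw [norm_pos_iff]
    intro h
    have h1 : A * (starRingEnd ℂ) B = 1 := by linear_combination -h
    have : ‖A * (starRingEnd ℂ) B‖ = 1 := by rw [h1]; simp
    rw [norm_mul, Complex.norm_conj] at this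
    rw [norm_mul] at hAB
    rw [this] at hAB
    exact absurd hAB (lt_irrefl 1)
  have hd : 0 < 1 - (‖A*B‖)^2 := by
    nlinarith [norm_nonneg (A*B)]
  have hcast : (1 - ((‖A*B‖ : ℂ))^2)
      = (((1 - (‖A*B‖)^2 : ℝ)) : ℂ) := by push_cast; ring
  have habs : ‖(A * ((‖B‖ : ℂ)^2 - 1) + B * ((‖A‖ : ℂ)^2 - 1)) /
      (1 - ((‖A*B‖ : ℂ))^2)‖
      = ‖A * ((‖B‖ : ℂ)^2 - 1) + B * ((‖A‖ : ℂ)^2 - 1)‖ /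
        (1 - (‖A*B‖)^2) := by
    rw [hcast, norm_div, Complex.norm_real, Real.norm_eq_abs, abs_of_pos hd]
  rw [habs]
  rw [norm_mul] at hAB hd hid ⊢
  exact cohn_aux (‖A‖) (‖B‖) _ _
    (norm_nonneg B) (norm_nonneg _)
    hA (by nlinarith [norm_nonneg A]) hAB
    (mul_nonneg (norm_nonneg _) (norm_nonneg _)) hc hid
end

section
/- Let γ, θ ∈ ℝ and r ∈ [0, 1), and set a = r e^{iθ} ∈ ℂ. Define u = 6a² e^{−iγ} + 8a e^{iγ} − 4 conj(a) e^{2iγ} − 3r² + 2e^{3iγ} − 1 (a complex number) and v = 4r² cos(2θ − γ) + 4r cos(θ + γ) − 8r cos(θ − 2γ) − 3 − 5r² (a real number). Then |u|² − v² = 8 (r cos(θ − γ/2) + cos(3γ/2))² · ((cos²(θ − γ/2) + 9 sin²(θ − γ/2)) r² − 1). -/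
open Complex Real

set_option maxHeartbeats 2000000 in
/-- Claim (b) in the proof of Theorem 1.2: with `a = r e^{iθ}`,
`u = 6a²e^{−iγ} + 8a e^{iγ} − 4 conj(a) e^{2iγ} − 3r² + 2e^{3iγ} − 1` and
`v = 4r² cos(2θ−γ) + 4r cos(θ+γ) − 8r cos(θ−2γ) − 3 − 5r²`, one has
`|u|² − v² = 8 (r cos(θ−γ/2) + cos(3γ/2))² ((cos²(θ−γ/2) + 9 sin²(θ−γ/2)) r² − 1)`. -/
theorem cohn_point_modulus_identity
    (γ θ r : ℝ) (hr0 : 0 ≤ r) (hr1 : r < 1) :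
    (norm
        (6 * ((r : ℂ) * Complex.exp (θ * Complex.I))^2 * Complex.exp (-(γ : ℝ) * Complex.I)
          + 8 * ((r : ℂ) * Complex.exp (θ * Complex.I)) * Complex.exp ((γ : ℝ) * Complex.I)
          - 4 * (starRingEnd ℂ) ((r : ℂ) * Complex.exp (θ * Complex.I))
              * Complex.exp ((2*γ : ℝ) * Complex.I)
          - 3 * (r : ℂ)^2 + 2 * Complex.exp ((3*γ : ℝ) * Complex.I) - 1))^2
      - (4*r^2 * Real.cos (2*θ - γ) + 4*r * Real.cos (θ + γ)
          - 8*r * Real.cos (θ - 2*γ) - 3 - 5*r^2)^2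
    = 8 * (r * Real.cos (θ - γ/2) + Real.cos (3*γ/2))^2 *
        (((Real.cos (θ - γ/2))^2 + 9 * (Real.sin (θ - γ/2))^2) * r^2 - 1) := by
  obtain ⟨x, y, rfl, rfl⟩ : ∃ x y, θ = x + y ∧ γ = 2*y :=
    ⟨θ - γ/2, γ/2, by ring, by ring⟩
  rw [show 2*(x+y) - 2*y = x+x from by ring, show x+y+2*y = x+(y+y+y) from by ring,
    show x+y-2*(2*y) = x-(y+y+y) from by ring, show x+y-2*y/2 = x from by ring,
    show 3*(2*y)/2 = y+(y+y) from by ring]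
  rw [Complex.sq_norm, Complex.normSq_apply]
  simp only [pow_two, Complex.exp_mul_I, ← Complex.ofReal_neg, ← Complex.ofReal_cos,
    ← Complex.ofReal_sin, Real.cos_neg, Real.sin_neg, map_mul, map_add, map_sub, map_neg,
    Complex.conj_ofReal, Complex.conj_I, Complex.add_re, Complex.add_im, Complex.sub_re,
    Complex.sub_im, Complex.neg_re, Complex.neg_im, Complex.mul_re, Complex.mul_im,
    Complex.ofReal_re, Complex.ofReal_im, Complex.I_re, Complex.I_im, Complex.one_re,
    Complex.one_im, Complex.re_ofNat, Complex.im_ofNat]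
  rw [show (2*(2*y) : ℝ) = y+y+(y+y) from by ring,
    show (3*(2*y) : ℝ) = y+y+(y+y)+(y+y) from by ring,
    show (2*y : ℝ) = y+y from by ring]
  simp only [Real.cos_add, Real.sin_add, Real.cos_sub, Real.sin_sub]
  have hx : Real.sin x^2 + Real.cos x^2 = 1 := Real.sin_sq_add_cos_sq x
  have hy : Real.sin y^2 + Real.cos y^2 = 1 := Real.sin_sq_add_cos_sq y
  linear_combination (-24*r^2 + 12*r^2*Real.sin y^4 + -80*r^2*Real.sin y^6 + 64*r^2*Real.sin y^8 + 40*r^2*Real.sin y^10 + 24*r^2*Real.cos y^2*Real.sin y^2 + 408*r^2*Real.cos y^2*Real.sin y^4 + 256*r^2*Real.cos y^2*Real.sin y^6 + -232*r^2*Real.cos y^2*Real.sin y^8 + 12*r^2*Real.cos y^4 + -672*r^2*Real.cos y^4*Real.sin y^2 + 384*r^2*Real.cos y^4*Real.sin y^4 + -176*r^2*Real.cos y^4*Real.sin y^6 + -8*r^2*Real.cos y^6 + 256*r^2*Real.cos y^6*Real.sin y^2 + 496*r^2*Real.cos y^6*Real.sin y^4 + 64*r^2*Real.cos y^8 + 392*r^2*Real.cos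 y^8*Real.sin y^2 + -8*r^2*Real.cos y^10 + 96*r^3*Real.sin x*Real.sin y^3 + -96*r^3*Real.sin x*Real.sin y^7 + -48*r^3*Real.sin x*Real.sin y^9 + -288*r^3*Real.sin x*Real.cos y^2*Real.sin y + 96*r^3*Real.sin x*Real.cos y^2*Real.sin y^5 + 480*r^3*Real.sin x*Real.cos y^4*Real.sin y^3 + 288*r^3*Real.sin x*Real.cos y^4*Real.sin y^5 + 288*r^3*Real.sin x*Real.cos y^6*Real.sin y + 384*r^3*Real.sin x*Real.cos y^6*Real.sin y^3 + 144*r^3*Real.sin x*Real.cos y^8*Real.sin y + 528*r^3*Real.cos x*Real.cos y*Real.sin y^2 + -288*r^3*Real.cos x*Real.cos y*Real.sin y^6 + -432*r^3*Real.cos x*Real.cos y*Real.sin y^8 + -176*r^3*Real.cos x*Real.cos y^3 + -480*r^3*Real.cos x*Real.cos y^3*Real.sin y^4 + -1152*r^3*Real.cos x*Real.cos y^3*Real.sin y^6 + -96*r^3*Real.cos x*Real.cos y^5*Real.sin y^2 + -864*r^3*Real.cos x*Real.cos y^5*Real.sin y^4 + 96*r^3*Real.cos x*Real.cos y^7 +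 144*r^3*Real.cos x*Real.cos y^9 + -56*r^4 + 36*r^4*Real.sin y^4 + 36*r^4*Real.sin y^8 + 72*r^4*Real.cos y^2*Real.sin y^2 + 144*r^4*Real.cos y^2*Real.sin y^6 + 36*r^4*Real.cos y^4 + 216*r^4*Real.cos y^4*Real.sin y^4 + 144*r^4*Real.cos y^6*Real.sin y^2 + 36*r^4*Real.cos y^8 + -16*r^4*Real.sin x^2 + 36*r^4*Real.sin x^2*Real.sin y^8 + 144*r^4*Real.sin x^2*Real.cos y^2*Real.sin y^6 + 216*r^4*Real.sin x^2*Real.cos y^4*Real.sin y^4 + 144*r^4*Real.sin x^2*Real.cos y^6*Real.sin y^2 + 36*r^4*Real.sin x^2*Real.cos y^8 + -24*r^4*Real.cos x^2 + 36*r^4*Real.cos x^2*Real.sin y^8 + 144*r^4*Real.cos x^2*Real.cos y^2*Real.sin y^6 + 216*r^4*Real.cos x^2*Real.cos y^4*Real.sin y^4 + 144*r^4*Real.cos x^2*Real.cos y^6*Real.sin y^2 + 36*r^4*Real.cos x^2*Real.cos y^8) * hx + (8 + 8*Real.sin y^2 + 8*Real.sin y^4 + 4*Real.sin y^6 + 4*Real.sin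 y^8 + 4*Real.sin y^10 + 8*Real.cos y^2 + 16*Real.cos y^2*Real.sin y^2 + 12*Real.cos y^2*Real.sin y^4 + 16*Real.cos y^2*Real.sin y^6 + 20*Real.cos y^2*Real.sin y^8 + 8*Real.cos y^4 + 12*Real.cos y^4*Real.sin y^2 + 24*Real.cos y^4*Real.sin y^4 + 40*Real.cos y^4*Real.sin y^6 + 4*Real.cos y^6 + 16*Real.cos y^6*Real.sin y^2 + 40*Real.cos y^6*Real.sin y^4 + 4*Real.cos y^8 + 20*Real.cos y^8*Real.sin y^2 + 4*Real.cos y^10 + -56*r*Real.sin x*Real.sin y^3 + -48*r*Real.sin x*Real.sin y^5 + -48*r*Real.sin x*Real.sin y^7 + -16*r*Real.sin x*Real.sin y^9 + 168*r*Real.sin x*Real.cos y^2*Real.sin y + 96*r*Real.sin x*Real.cos y^2*Real.sin y^3 + 48*r*Real.sin x*Real.cos y^2*Real.sin y^5 + 144*r*Real.sin x*Real.cos y^4*Real.sin y + 240*r*Real.sin x*Real.cos y^4*Real.sin y^3 + 96*r*Real.sin x*Real.cos y^4*Real.sin y^5 + 144*r*Real.sin x*Real.cos y^6*Real.sin y +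 128*r*Real.sin x*Real.cos y^6*Real.sin y^3 + 48*r*Real.sin x*Real.cos y^8*Real.sin y + -72*r*Real.cos x*Real.cos y*Real.sin y^2 + -48*r*Real.cos x*Real.cos y*Real.sin y^4 + -48*r*Real.cos x*Real.cos y*Real.sin y^6 + 48*r*Real.cos x*Real.cos y*Real.sin y^8 + 24*r*Real.cos x*Real.cos y^3 + -32*r*Real.cos x*Real.cos y^3*Real.sin y^2 + -80*r*Real.cos x*Real.cos y^3*Real.sin y^4 + 128*r*Real.cos x*Real.cos y^3*Real.sin y^6 + 16*r*Real.cos x*Real.cos y^5 + -16*r*Real.cos x*Real.cos y^5*Real.sin y^2 + 96*r*Real.cos x*Real.cos y^5*Real.sin y^4 + 16*r*Real.cos x*Real.cos y^7 + -16*r*Real.cos x*Real.cos y^9 + 48*r^2 + 48*r^2*Real.sin y^2 + 36*r^2*Real.sin y^4 + 104*r^2*Real.sin y^6 + 40*r^2*Real.sin y^8 + 48*r^2*Real.cos y^2 + 72*r^2*Real.cos y^2*Real.sin y^2 + -120*r^2*Real.cos y^2*Real.sin y^4 + -272*r^2*Real.cos y^2*Real.sin y^6 + 36*r^2*Real.cos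 y^4 + 600*r^2*Real.cos y^4*Real.sin y^2 + 96*r^2*Real.cos y^4*Real.sin y^4 + 56*r^2*Real.cos y^6 + 400*r^2*Real.cos y^6*Real.sin y^2 + -8*r^2*Real.cos y^8 + 288*r^2*Real.cos x*Real.sin x*Real.cos y*Real.sin y^5 + 288*r^2*Real.cos x*Real.sin x*Real.cos y*Real.sin y^7 + -960*r^2*Real.cos x*Real.sin x*Real.cos y^3*Real.sin y^3 + -672*r^2*Real.cos x*Real.sin x*Real.cos y^3*Real.sin y^5 + 288*r^2*Real.cos x*Real.sin x*Real.cos y^5*Real.sin y + -672*r^2*Real.cos x*Real.sin x*Real.cos y^5*Real.sin y^3 + 288*r^2*Real.cos x*Real.sin x*Real.cos y^7*Real.sin y + -56*r^2*Real.cos x^2 + -56*r^2*Real.cos x^2*Real.sin y^2 + -32*r^2*Real.cos x^2*Real.sin y^4 + -176*r^2*Real.cos x^2*Real.sin y^6 + -48*r^2*Real.cos x^2*Real.sin y^8 + -56*r^2*Real.cos x^2*Real.cos y^2 + -64*r^2*Real.cos x^2*Real.cos y^2*Real.sin y^2 + 336*r^2*Real.cos x^2*Real.cos y^2*Real.sin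 y^4 + 672*r^2*Real.cos x^2*Real.cos y^2*Real.sin y^6 + -32*r^2*Real.cos x^2*Real.cos y^4 + -1104*r^2*Real.cos x^2*Real.cos y^4*Real.sin y^2 + -80*r^2*Real.cos x^2*Real.cos y^6 + -672*r^2*Real.cos x^2*Real.cos y^6*Real.sin y^2 + 48*r^2*Real.cos x^2*Real.cos y^8 + -168*r^3*Real.sin x*Real.sin y^3 + -144*r^3*Real.sin x*Real.sin y^5 + -48*r^3*Real.sin x*Real.sin y^7 + 504*r^3*Real.sin x*Real.cos y^2*Real.sin y + 288*r^3*Real.sin x*Real.cos y^2*Real.sin y^3 + 48*r^3*Real.sin x*Real.cos y^2*Real.sin y^5 + 432*r^3*Real.sin x*Real.cos y^4*Real.sin y + 240*r^3*Real.sin x*Real.cos y^4*Real.sin y^3 + 144*r^3*Real.sin x*Real.cos y^6*Real.sin y + -792*r^3*Real.cos x*Real.cos y*Real.sin y^2 + -720*r^3*Real.cos x*Real.cos y*Real.sin y^4 + -432*r^3*Real.cos x*Real.cos y*Real.sin y^6 + 264*r^3*Real.cos x*Real.cos y^3 + -480*r^3*Real.cos x*Real.cos y^3*Real.sin y^2 +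 -720*r^3*Real.cos x*Real.cos y^3*Real.sin y^4 + 240*r^3*Real.cos x*Real.cos y^5 + -144*r^3*Real.cos x*Real.cos y^5*Real.sin y^2 + 144*r^3*Real.cos x*Real.cos y^7 + 192*r^3*Real.cos x^2*Real.sin x*Real.sin y^3 + 192*r^3*Real.cos x^2*Real.sin x*Real.sin y^5 + 192*r^3*Real.cos x^2*Real.sin x*Real.sin y^7 + -576*r^3*Real.cos x^2*Real.sin x*Real.cos y^2*Real.sin y + -384*r^3*Real.cos x^2*Real.sin x*Real.cos y^2*Real.sin y^3 + -192*r^3*Real.cos x^2*Real.sin x*Real.cos y^2*Real.sin y^5 + -576*r^3*Real.cos x^2*Real.sin x*Real.cos y^4*Real.sin y + -960*r^3*Real.cos x^2*Real.sin x*Real.cos y^4*Real.sin y^3 + -576*r^3*Real.cos x^2*Real.sin x*Real.cos y^6*Real.sin y + 576*r^3*Real.cos x^3*Real.cos y*Real.sin y^2 + 576*r^3*Real.cos x^3*Real.cos y*Real.sin y^4 + 576*r^3*Real.cos x^3*Real.cos y*Real.sin y^6 + -192*r^3*Real.cos x^3*Real.cos y^3 + 384*r^3*Real.cos x^3*Real.cos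 y^3*Real.sin y^2 + 960*r^3*Real.cos x^3*Real.cos y^3*Real.sin y^4 + -192*r^3*Real.cos x^3*Real.cos y^5 + 192*r^3*Real.cos x^3*Real.cos y^5*Real.sin y^2 + -192*r^3*Real.cos x^3*Real.cos y^7 + 72*r^4 + 72*r^4*Real.sin y^2 + 36*r^4*Real.sin y^4 + 36*r^4*Real.sin y^6 + 72*r^4*Real.cos y^2 + 72*r^4*Real.cos y^2*Real.sin y^2 + 108*r^4*Real.cos y^2*Real.sin y^4 + 36*r^4*Real.cos y^4 + 108*r^4*Real.cos y^4*Real.sin y^2 + 36*r^4*Real.cos y^6 + -72*r^4*Real.cos x^2 + -72*r^4*Real.cos x^2*Real.sin y^2 + -72*r^4*Real.cos x^2*Real.cos y^2) * hy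
end

section
/- Let γ, θ, r be real numbers. Then 4r² cos(2θ − γ) + 4r cos(θ + γ) − 8r cos(θ − 2γ) − 3 − 5r² = 1 − (r cos(θ − γ/2) + 2 cos(3γ/2))² − (3r sin(θ − γ/2) + 2 sin(3γ/2))². Consequently, this quantity is ≤ 0 whenever r² (cos²(θ − γ/2) + 9 sin²(θ − γ/2)) ≤ 1 and r ∈ [0,1), with equality to 0 if and only if r cos(θ − γ/2) = −cos(3γ/2) and 3r sin(θ − γ/2) = −sin(3γ/2). -/
set_option maxHeartbeats 800000


open Real

/-- The identity for `v(a)` from Lemma 2.6: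
`4r² cos(2θ−γ) + 4r cos(θ+γ) − 8r cos(θ−2γ) − 3 − 5r²
  = 1 − (r cos(θ−γ/2) + 2 cos(3γ/2))² − (3r sin(θ−γ/2) + 2 sin(3γ/2))²`,
together with its consequence: the quantity is `≤ 0` whenever
`r²(cos²(θ−γ/2) + 9 sin²(θ−γ/2)) ≤ 1` and `r ∈ [0,1)`, with equality iff
`r cos(θ−γ/2) = −cos(3γ/2)` and `3r sin(θ−γ/2) = −sin(3γ/2)`. -/
theorem v_identity_and_sign (γ θ r : ℝ) :
    (4*r^2 * Real.cos (2*θ - γ) + 4*r * Real.cos (θ + γ)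
        - 8*r * Real.cos (θ - 2*γ) - 3 - 5*r^2
      = 1 - (r * Real.cos (θ - γ/2) + 2 * Real.cos (3*γ/2))^2
          - (3*r * Real.sin (θ - γ/2) + 2 * Real.sin (3*γ/2))^2) ∧
    (0 ≤ r → r < 1 →
      r^2 * ((Real.cos (θ - γ/2))^2 + 9 * (Real.sin (θ - γ/2))^2) ≤ 1 →
      (4*r^2 * Real.cos (2*θ - γ) + 4*r * Real.cos (θ + γ)
          - 8*r * Real.cos (θ - 2*γ) - 3 - 5*r^2 ≤ 0 ∧
        (4*r^2 * Real.cos (2*θ - γ) + 4*r * Real.cos (θ + γ)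
            - 8*r * Real.cos (θ - 2*γ) - 3 - 5*r^2 = 0 ↔
          (r * Real.cos (θ - γ/2) = -Real.cos (3*γ/2) ∧
            3*r * Real.sin (θ - γ/2) = -Real.sin (3*γ/2))))) := by
  have hc : Real.sin (θ - γ/2) ^ 2 + Real.cos (θ - γ/2) ^ 2 = 1 :=
    Real.sin_sq_add_cos_sq _
  have hC : Real.sin (3*γ/2) ^ 2 + Real.cos (3*γ/2) ^ 2 = 1 :=
    Real.sin_sq_add_cos_sq _
  have h1 : 2*θ - γ = (θ - γ/2) + (θ - γ/2) := by ring
  have h2 : θ + γ = (θ - γ/2) + (3*γ/2) := by ring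
  have h3 : θ - 2*γ = (θ - γ/2) - (3*γ/2) := by ring
  have hid : 4*r^2 * Real.cos (2*θ - γ) + 4*r * Real.cos (θ + γ)
        - 8*r * Real.cos (θ - 2*γ) - 3 - 5*r^2
      = 1 - (r * Real.cos (θ - γ/2) + 2 * Real.cos (3*γ/2))^2
          - (3*r * Real.sin (θ - γ/2) + 2 * Real.sin (3*γ/2))^2 := by
    have e1 : Real.cos (2*θ - γ)
        = Real.cos (θ - γ/2) * Real.cos (θ - γ/2)
          - Real.sin (θ - γ/2) * Real.sin (θ - γ/2) := by
      rw [h1]; exact Real.cos_add _ _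
    have e2 : Real.cos (θ + γ)
        = Real.cos (θ - γ/2) * Real.cos (3*γ/2)
          - Real.sin (θ - γ/2) * Real.sin (3*γ/2) := by
      rw [h2]; exact Real.cos_add _ _
    have e3 : Real.cos (θ - 2*γ)
        = Real.cos (θ - γ/2) * Real.cos (3*γ/2)
          + Real.sin (θ - γ/2) * Real.sin (3*γ/2) := by
      rw [h3]; exact Real.cos_sub _ _
    rw [e1, e2, e3]
    linear_combination 5*r^2*hc + 4*hC
  refine ⟨hid, fun hr0 hr1 hle => ?_⟩
  set c := Real.cos (θ - γ/2)
  set s := Real.sin (θ - γ/2)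
  set C := Real.cos (3*γ/2)
  set S := Real.sin (3*γ/2)
  constructor
  · rw [hid]
    nlinarith [sq_nonneg (r*c + C), sq_nonneg (3*r*s + S), hC, hle]
  · rw [hid]
    constructor
    · intro h0
      have hx : (r*c + C)^2 ≤ 0 := by
        nlinarith [sq_nonneg (3*r*s + S), hC, hle]
      have hy : (3*r*s + S)^2 ≤ 0 := by
        nlinarith [sq_nonneg (r*c + C), hC, hle]
      constructor
      · nlinarith [sq_nonneg (r*c + C)]
      · nlinarith [sq_nonneg (3*r*s + S)]
    · rintro ⟨hx, hy⟩
      rw [hx, hy]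
      nlinarith [hC]
end

section
/- Let γ, θ ∈ ℝ and consider the quadratic polynomial t(z) = z² + (1/2) e^{i(2γ − θ)} z + (1/2) e^{i(γ − θ)}. Then every root of t lies in the closed unit disk {z ∈ ℂ : |z| ≤ 1}. -/
open Complex

/-- The Cohn's rule step in the proof of Theorem 1.1 (case `n = 1`): every root of
`t(z) = z² + (1/2)e^{i(2γ−θ)} z + (1/2)e^{i(γ−θ)}` lies in the closed unit disk. -/
theorem quadratic_roots_in_closed_unit_disk (γ θ : ℝ) :
    ∀ z : ℂ,
      z^2 + (1/2) * Complex.exp ((2*γ - θ : ℝ) * Complex.I) * z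
          + (1/2) * Complex.exp ((γ - θ : ℝ) * Complex.I) = 0 →
      ‖z‖ ≤ 1 := by
  intro z hz
  have h1 : z^2 = -((1/2) * Complex.exp ((2*γ - θ : ℝ) * Complex.I) * z
      + (1/2) * Complex.exp ((γ - θ : ℝ) * Complex.I)) := by linear_combination hz
  have e1 : ‖Complex.exp ((2*γ - θ : ℝ) * Complex.I)‖ = 1 :=
    Complex.norm_exp_ofReal_mul_I _
  have e2 : ‖Complex.exp ((γ - θ : ℝ) * Complex.I)‖ = 1 :=
    Complex.norm_exp_ofReal_mul_I _
  have hb : ‖z‖ ^ 2 ≤ (1/2) * ‖z‖ + 1/2 := by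
    calc ‖z‖ ^ 2 = ‖z^2‖ := by rw [norm_pow]
      _ = ‖(1/2) * Complex.exp ((2*γ - θ : ℝ) * Complex.I) * z
          + (1/2) * Complex.exp ((γ - θ : ℝ) * Complex.I)‖ := by rw [h1, norm_neg]
      _ ≤ ‖(1/2) * Complex.exp ((2*γ - θ : ℝ) * Complex.I) * z‖
          + ‖(1/2) * Complex.exp ((γ - θ : ℝ) * Complex.I)‖ := norm_add_le _ _
      _ = (1/2) * ‖z‖ + 1/2 := by
          push_cast at e1 e2
          simp [map_mul, e1, e2]
  nlinarith [norm_nonneg z]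
end

section
/- Let γ, θ ∈ ℝ. Then for every z in the open unit disk 𝔻 = {z ∈ ℂ : |z| < 1}, the denominator 1 + e^{i(θ − γ)} z³ is nonzero and | −z² e^{i(2θ − γ)} (z³ + e^{i(γ − θ)}) / (1 + e^{i(θ − γ)} z³) | = |z|² < 1. -/
open Complex Metric

/-- The `n = 2` case in the proof of Theorem 1.1: for every `z ∈ 𝔻` the denominator
`1 + e^{i(θ−γ)} z³` is nonzero and the dilatation
`−z² e^{i(2θ−γ)} (z³ + e^{i(γ−θ)})/(1 + e^{i(θ−γ)} z³)` has modulus `|z|² < 1`. -/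
theorem dilatation_modulus_n_two (γ θ : ℝ) :
    ∀ z ∈ Metric.ball (0:ℂ) 1,
      (1 + Complex.exp ((θ - γ : ℝ) * Complex.I) * z^3) ≠ 0 ∧
      ‖(-z^2 * Complex.exp ((2*θ - γ : ℝ) * Complex.I) *
          ((z^3 + Complex.exp ((γ - θ : ℝ) * Complex.I)) /
            (1 + Complex.exp ((θ - γ : ℝ) * Complex.I) * z^3)))‖
        = (‖z‖)^2 ∧
      (‖z‖)^2 < 1 := by
  intro z hz
  simp only [Metric.mem_ball, dist_zero_right] at hz
  set u := Complex.exp ((θ - γ : ℝ) * Complex.I) with hu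
  have habsu : ‖u‖ = 1 := Complex.norm_exp_ofReal_mul_I _
  have habsz3 : ‖u * z^3‖ < 1 := by
    rw [norm_mul, habsu, one_mul, norm_pow]
    calc ‖z‖ ^ 3 ≤ ‖z‖ := by
          nlinarith [norm_nonneg z, sq_nonneg ‖z‖]
      _ < 1 := hz
  have hd : (1 + u * z^3) ≠ 0 := by
    intro h
    have : ‖u * z^3‖ = 1 := by
      have : u * z^3 = -1 := by linear_combination h
      rw [this]; simp
    linarith
  refine ⟨hd, ?_, ?_⟩
  · have hinv : Complex.exp ((γ - θ : ℝ) * Complex.I) = u⁻¹ := by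
      rw [hu, ← Complex.exp_neg]
      congr 1
      push_cast
      ring
    have hu0 : u ≠ 0 := Complex.exp_ne_zero _
    have hnum : z^3 + Complex.exp ((γ - θ : ℝ) * Complex.I) = u⁻¹ * (1 + u * z^3) := by
      rw [hinv]
      field_simp
      ring
    rw [hnum, norm_mul, norm_mul, norm_div, norm_mul, norm_inv, habsu]
    rw [norm_neg, norm_pow, Complex.norm_exp_ofReal_mul_I]
    rw [mul_div_assoc, div_self (by simpa using hd), mul_one]
    norm_num
  · nlinarith [norm_nonneg z]
end
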